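/- arXiv:2105.08309 — 8 statements merged into one kernel-verified Lean document; each statement's English description precedes it below -/
import Mathlib

section
/- Let H be a finite-dimensional complex inner product space, let Π and Λ be orthogonal projections on H, and let U = (2Π − I)(2Λ − I). For Θ ∈ [0, π], let P_Θ denote the orthogonal projection onto the span of all eigenvectors of U whose eigenvalue is e^{iθ} for some θ ∈ (−π, π] with |θ| ≤ Θ. Then for every u ∈ H with Λu = 0 one has ‖P_Θ Π u‖ ≤ (Θ/2)·‖u‖. -/
/-! `U` is unitary, being a product of the reflections `2Π - 1` and `2Λ - 1`. If `Λ u = 0` then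
`2 Π u = (1 - U) u`, so for `w = P_Θ Π u` we get
`2 ‖w‖² = 2 Re ⟪Π u, w⟫ = Re ⟪u, (1 - U)* w⟫ ≤ ‖u‖ ‖(1 - U)* w‖`.
The positive operator `(1 - U)(1 - U)*` acts on an eigenvector of `U` with eigenvalue `μ` as the
scalar `|1 - μ|²`, and `|1 - e^{iθ}| ≤ |θ|`. Eigenspaces of a self-adjoint operator are mutually
orthogonal, so on the span of the eigenvectors with `|θ| ≤ Θ` this operator is bounded by `Θ²`,
i.e. `‖(1 - U)* w‖ ≤ Θ ‖w‖`. -/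

open scoped InnerProductSpace

noncomputable section

/-- `P` is an orthogonal projection: idempotent and symmetric. -/
def IsOrthProj {H : Type*} [NormedAddCommGroup H] [InnerProductSpace ℂ H]
    (P : H →ₗ[ℂ] H) : Prop :=
  P ∘ₗ P = P ∧ ∀ x y : H, ⟪P x, y⟫_ℂ = ⟪x, P y⟫_ℂ

open scoped ComplexConjugate

section Symmetric

variable {𝕜 E : Type*} [RCLike 𝕜] [NormedAddCommGroup E] [InnerProductSpace 𝕜 E]

theorem LinearMap.IsSymmetric.re_inner_map_self_le_of_mem_iSup_eigenspace
    {T : E →ₗ[𝕜] E} (hT : T.IsSymmetric) {c : ℝ} {x : E}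
    (hx : x ∈ ⨆ (μ : 𝕜) (_ : RCLike.re μ ≤ c), Module.End.eigenspace T μ) :
    RCLike.re ⟪x, T x⟫_𝕜 ≤ c * ‖x‖ ^ 2 := by
  rw [iSup_subtype'] at hx
  obtain ⟨s, hs⟩ := Submodule.exists_finset_of_mem_iSup _ hx
  obtain ⟨l, rfl⟩ := (Submodule.mem_iSup_finset_iff_exists_sum _ _).mp hs
  have horth := hT.orthogonalFamily_eigenspaces.comp
    (Subtype.val_injective (p := fun μ : 𝕜 => RCLike.re μ ≤ c))
  have hTl : ∀ μ : {μ : 𝕜 // RCLike.re μ ≤ c}, T (l μ) = (μ : 𝕜) • (l μ : E) := fun μ =>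
    Module.End.mem_eigenspace_iff.mp (l μ).2
  have hinner := horth.inner_sum l (fun μ => (μ : 𝕜) • l μ) s
  have hnorm := horth.norm_sum l s
  simp only [Submodule.coe_subtypeₗᵢ, Submodule.subtype_apply, Submodule.coe_smul]
    at hinner hnorm
  rw [map_sum, Finset.sum_congr rfl fun μ _ => hTl μ, hinner, hnorm, map_sum, Finset.mul_sum]
  gcongr with μ
  rw [inner_smul_right, inner_self_eq_norm_sq_to_K, ← RCLike.ofReal_pow, RCLike.re_mul_ofReal]
  exact mul_le_mul_of_nonneg_right μ.2 (sq_nonneg _)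

end Symmetric

section Unitary

variable {𝕜 E : Type*} [RCLike 𝕜] [NormedAddCommGroup E] [InnerProductSpace 𝕜 E]
  [FiniteDimensional 𝕜 E] {U : E →ₗ[𝕜] E}

theorem LinearMap.norm_star_apply_sq (A : E →ₗ[𝕜] E) (x : E) :
    ‖star A x‖ ^ 2 = RCLike.re ⟪x, (A * star A) x⟫_𝕜 := by
  rw [Module.End.mul_apply, ← LinearMap.adjoint_inner_left, ← LinearMap.star_eq_adjoint,
    inner_self_eq_norm_sq]

theorem star_apply_eq_conj_smul_of_mem_unitary (hU : U ∈ unitary (E →ₗ[𝕜] E)) {μ : 𝕜}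
    (hμ : ‖μ‖ = 1) {v : E} (hv : U v = μ • v) : star U v = conj μ • v := by
  have hv' : v = μ • star U v := by
    rw [← map_smul, ← hv, ← Module.End.mul_apply, Unitary.star_mul_self_of_mem hU,
      Module.End.one_apply]
  calc star U v = (conj μ * μ) • star U v := by
        rw [RCLike.conj_mul, hμ, RCLike.ofReal_one, one_pow, one_smul]
    _ = conj μ • v := by rw [mul_smul, ← hv']

theorem one_sub_mul_star_one_sub_apply_of_mem_unitary (hU : U ∈ unitary (E →ₗ[𝕜] E))
    {μ : 𝕜} (hμ : ‖μ‖ = 1) {v : E} (hv : U v = μ • v) :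
    ((1 - U) * star (1 - U)) v = ((‖1 - μ‖ ^ 2 : ℝ) : 𝕜) • v := by
  have hstar : star (1 - U) v = conj (1 - μ) • v := by
    rw [star_sub, star_one, LinearMap.sub_apply, Module.End.one_apply,
      star_apply_eq_conj_smul_of_mem_unitary hU hμ hv, map_sub, map_one, sub_smul, one_smul]
  have hsub : v - μ • v = (1 - μ) • v := by rw [sub_smul, one_smul]
  rw [Module.End.mul_apply, hstar, map_smul, LinearMap.sub_apply, Module.End.one_apply, hv, hsub,
    smul_smul, RCLike.conj_mul, RCLike.ofReal_pow]

theorem norm_star_one_sub_apply_le_of_mem_span_eigenvectors (hU : U ∈ unitary (E →ₗ[𝕜] E))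
    {Θ : ℝ} (hΘ : 0 ≤ Θ) {x : E}
    (hx : x ∈ Submodule.span 𝕜 {v | ∃ μ : 𝕜, ‖μ‖ = 1 ∧ ‖1 - μ‖ ≤ Θ ∧ U v = μ • v}) :
    ‖star (1 - U) x‖ ≤ Θ * ‖x‖ := by
  have hT : ((1 - U) * star (1 - U)).IsSymmetric := LinearMap.isSymmetric_self_comp_adjoint _
  have hspan : Submodule.span 𝕜 {v | ∃ μ : 𝕜, ‖μ‖ = 1 ∧ ‖1 - μ‖ ≤ Θ ∧ U v = μ • v} ≤
      ⨆ (μ : 𝕜) (_ : RCLike.re μ ≤ Θ ^ 2), Module.End.eigenspace ((1 - U) * star (1 - U)) μ := by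
    rw [Submodule.span_le]
    rintro v ⟨μ, hμ, hμΘ, hv⟩
    refine Submodule.mem_iSup_of_mem ((‖1 - μ‖ ^ 2 : ℝ) : 𝕜) (Submodule.mem_iSup_of_mem ?_ ?_)
    · rw [RCLike.ofReal_re]
      exact pow_le_pow_left₀ (norm_nonneg _) hμΘ 2
    · exact Module.End.mem_eigenspace_iff.mpr
        (one_sub_mul_star_one_sub_apply_of_mem_unitary hU hμ hv)
  have hsq := hT.re_inner_map_self_le_of_mem_iSup_eigenspace (hspan hx)
  rw [← LinearMap.norm_star_apply_sq, ← mul_pow] at hsq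
  exact (pow_le_pow_iff_left₀ (norm_nonneg _) (by positivity) two_ne_zero).mp hsq

end Unitary

namespace IsOrthProj

variable {H : Type*} [NormedAddCommGroup H] [InnerProductSpace ℂ H] {P : H →ₗ[ℂ] H}

theorem norm_apply_sq (hP : IsOrthProj P) (x : H) : ‖P x‖ ^ 2 = (⟪x, P x⟫_ℂ).re := by
  rw [← inner_self_eq_norm_sq (𝕜 := ℂ), hP.2, ← LinearMap.comp_apply, hP.1]
  rfl

theorem reflection_mem_unitary [FiniteDimensional ℂ H] (hP : IsOrthProj P) :
    2 • P - LinearMap.id ∈ unitary (H →ₗ[ℂ] H) := by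
  have hstar : IsStarProjection P :=
    LinearMap.isStarProjection_iff_isSymmetricProjection.mpr ⟨hP.1, hP.2⟩
  simpa [two_smul, two_mul, Module.End.one_eq_id] using hstar.two_mul_sub_one_mem_unitary

end IsOrthProj

/-- **Effective spectral gap lemma.**  Let `Π` and `Λ` be orthogonal projections on a
finite-dimensional complex inner product space `H`, let `U = (2Π − I)(2Λ − I)`, and for
`Θ ∈ [0, π]` let `P_Θ` be the orthogonal projection onto the span of all eigenvectors of `U`
with eigenvalue `e^{iθ}`, `θ ∈ (−π, π]`, `|θ| ≤ Θ`.  Then `Λ u = 0` implies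
`‖P_Θ (Π u)‖ ≤ (Θ/2)·‖u‖`. -/
theorem effective_spectral_gap
    {H : Type*} [NormedAddCommGroup H] [InnerProductSpace ℂ H] [FiniteDimensional ℂ H]
    (Pi Lam : H →ₗ[ℂ] H) (hPi : IsOrthProj Pi) (hLam : IsOrthProj Lam)
    (U : H →ₗ[ℂ] H)
    (hU : U = (2 • Pi - LinearMap.id) ∘ₗ (2 • Lam - LinearMap.id))
    (Θ : ℝ) (hΘ : Θ ∈ Set.Icc (0 : ℝ) Real.pi)
    (PΘ : H →ₗ[ℂ] H) (hPΘ : IsOrthProj PΘ)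
    (hPΘrange : LinearMap.range PΘ = Submodule.span ℂ
      {u : H | ∃ θ : ℝ, θ ∈ Set.Ioc (-Real.pi) Real.pi ∧ |θ| ≤ Θ ∧
        U u = Complex.exp (θ * Complex.I) • u})
    (u : H) (hu : Lam u = 0) :
    ‖PΘ (Pi u)‖ ≤ (Θ / 2) * ‖u‖ := by
  have hUunitary : U ∈ unitary (H →ₗ[ℂ] H) :=
    hU ▸ mul_mem hPi.reflection_mem_unitary hLam.reflection_mem_unitary
  have hUu : (1 - U) u = (2 : ℂ) • Pi u := by
    rw [hU]
    simp [hu, two_smul]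
  set w := PΘ (Pi u)
  have hw : ‖star (1 - U) w‖ ≤ Θ * ‖w‖ := by
    refine norm_star_one_sub_apply_le_of_mem_span_eigenvectors hUunitary hΘ.1 ?_
    have hrange : w ∈ LinearMap.range PΘ := ⟨Pi u, rfl⟩
    rw [hPΘrange] at hrange
    refine Submodule.span_mono ?_ hrange
    rintro v ⟨θ, -, hθ, hv⟩
    refine ⟨_, Complex.norm_exp_ofReal_mul_I θ, ?_, hv⟩
    rw [norm_sub_rev, mul_comm]
    exact Real.norm_exp_I_mul_ofReal_sub_one_le.trans ((Real.norm_eq_abs θ).trans_le hθ)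
  have hkey : 2 * ‖w‖ ^ 2 ≤ ‖u‖ * (Θ * ‖w‖) :=
    calc 2 * ‖w‖ ^ 2 = (⟪(2 : ℂ) • Pi u, w⟫_ℂ).re := by
          rw [hPΘ.norm_apply_sq, inner_smul_left]
          simp [w]
      _ = (⟪u, star (1 - U) w⟫_ℂ).re := by
          rw [← hUu, LinearMap.star_eq_adjoint, LinearMap.adjoint_inner_right]
      _ ≤ ‖u‖ * ‖star (1 - U) w‖ := (Complex.re_le_norm _).trans (norm_inner_le_norm _ _)
      _ ≤ ‖u‖ * (Θ * ‖w‖) := by gcongr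
  nlinarith [norm_nonneg w, mul_nonneg hΘ.1 (norm_nonneg u)]

end
end

section
/- Suppose w ∈ H satisfies A w = z₀ − z_k and ‖w‖² ≤ W⁺, and set ψ := φ₊ − (ε/√W⁺)·(0, w) ∈ ℂ^{m+1} ⊕ H. Then M ψ = 0 and |⟨φ₊, ψ⟩|² ≥ (1 − ε²)·‖ψ‖². -/
/-!
`φ₊` is a unit vector orthogonal to `(0, w)`, so `ψ = φ₊ - v` with `v := (ε/√W⁺)·(0, w)` has
`⟪φ₊, ψ⟫ = 1` and, by Pythagoras, `‖ψ‖² = 1 + ‖v‖²` with `‖v‖² ≤ ε²`; hence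
`(1 - ε²)‖ψ‖² ≤ 1`. The weights of `M` are chosen so that
`M φ₊ = (ε/√W⁺)(z₀ - z_k) = (ε/√W⁺) A w = M v`.
-/

open scoped InnerProductSpace

open Finset

section Overlap

variable {𝕜 E : Type*} [RCLike 𝕜] [NormedAddCommGroup E] [InnerProductSpace 𝕜 E]

theorem one_sub_sq_mul_norm_sub_sq_le_norm_inner_sq {φ v : E} {ε : ℝ} (hφ : ‖φ‖ = 1)
    (hv : ⟪φ, v⟫_𝕜 = 0) (hvε : ‖v‖ ^ 2 ≤ ε ^ 2) :
    (1 - ε ^ 2) * ‖φ - v‖ ^ 2 ≤ ‖⟪φ, φ - v⟫_𝕜‖ ^ 2 := by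
  have hinner : ⟪φ, φ - v⟫_𝕜 = 1 := by
    rw [inner_sub_right, hv, sub_zero, inner_self_eq_norm_sq_to_K, hφ]
    simp
  have hpyth : ‖φ - v‖ ^ 2 = 1 + ‖v‖ ^ 2 := by
    rw [@norm_sub_sq 𝕜, hv, hφ]
    simp
  rw [hinner, hpyth, norm_one]
  nlinarith [mul_nonneg (sq_nonneg ε) (sq_nonneg ‖v‖)]

theorem norm_ofReal_div_sqrt_smul_sq_le {w : E} {W : ℝ} (hw : ‖w‖ ^ 2 ≤ W) (ε : ℝ) :
    ‖((ε / √W : ℝ) : 𝕜) • w‖ ^ 2 ≤ ε ^ 2 := by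
  have hW : 0 ≤ W := (sq_nonneg _).trans hw
  calc ‖((ε / √W : ℝ) : 𝕜) • w‖ ^ 2 = ε ^ 2 * (‖w‖ ^ 2 / W) := by
        rw [norm_smul, RCLike.norm_ofReal, mul_pow, sq_abs, div_pow, Real.sq_sqrt hW]
        ring
    _ ≤ ε ^ 2 * 1 := by gcongr; exact div_le_one_of_le₀ hw hW
    _ = ε ^ 2 := mul_one _

end Overlap

namespace EuclideanSpace

variable {𝕜 ι : Type*} [RCLike 𝕜] [Fintype ι] [DecidableEq ι]

theorem norm_single_add_single {i j : ι} (hij : i ≠ j) :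
    ‖(single i (1 : 𝕜) + single j 1 : EuclideanSpace 𝕜 ι)‖ = √2 := by
  have horth : ⟪single i (1 : 𝕜), single j 1⟫_𝕜 = 0 := orthonormal_single.2 hij
  rw [← Real.sqrt_sq (norm_nonneg _), @norm_add_sq 𝕜, horth]
  norm_num

theorem sum_filter_ne_smul_single_add_single_apply_smul {M : Type*} [AddCommMonoid M]
    [Module 𝕜 M] {i j : ι} (hij : i ≠ j) (a : 𝕜) (z : ι → M) :
    ∑ α ∈ univ.filter (· ≠ i), (a • (single i 1 + single j 1) : EuclideanSpace 𝕜 ι) α • z α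
      = a • z j := by
  rw [sum_eq_single_of_mem j (by simpa using hij.symm)]
  · simp [hij.symm]
  · intro b hb hbj
    simp [(mem_filter.mp hb).2, hbj]

end EuclideanSpace

theorem positive_witness_kernel_overlap_general
    {V H : Type*}
    [NormedAddCommGroup V] [InnerProductSpace ℂ V]
    [NormedAddCommGroup H] [InnerProductSpace ℂ H]
    (A : H →ₗ[ℂ] V) (ε Wp : ℝ)
    (m : ℕ) (k : Fin (m + 1)) (hk : k ≠ 0)
    (z : Fin (m + 1) → V)
    (M : WithLp 2 (EuclideanSpace ℂ (Fin (m + 1)) × H) →ₗ[ℂ] V)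
    (hM : ∀ (c : EuclideanSpace ℂ (Fin (m + 1))) (h : H),
      M ((WithLp.equiv 2 (EuclideanSpace ℂ (Fin (m + 1)) × H)).symm (c, h)) =
        ((Real.sqrt 2 * ε / Real.sqrt Wp : ℝ) : ℂ) •
          (c 0 • z 0 - ∑ α ∈ Finset.univ.filter (fun α : Fin (m + 1) => α ≠ 0), c α • z α)
        + A h)
    (w : H) (hw : A w = z 0 - z k) (hwnorm : ‖w‖ ^ 2 ≤ Wp)
    (φp ψ : WithLp 2 (EuclideanSpace ℂ (Fin (m + 1)) × H))
    (hφp : φp = (WithLp.equiv 2 (EuclideanSpace ℂ (Fin (m + 1)) × H)).symm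
      ((((Real.sqrt 2)⁻¹ : ℝ) : ℂ) •
        (EuclideanSpace.single 0 1 + EuclideanSpace.single k 1), 0))
    (hψ : ψ = φp - ((ε / Real.sqrt Wp : ℝ) : ℂ) •
      (WithLp.equiv 2 (EuclideanSpace ℂ (Fin (m + 1)) × H)).symm (0, w)) :
    M ψ = 0 ∧ (1 - ε ^ 2) * ‖ψ‖ ^ 2 ≤ ‖⟪φp, ψ⟫_ℂ‖ ^ 2 := by
  have h0k : (0 : Fin (m + 1)) ≠ k := hk.symm
  have hMφ : M φp = ((√2 * ε / √Wp : ℝ) : ℂ) • (((√2)⁻¹ : ℝ) : ℂ) • (z 0 - z k) := by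
    rw [hφp, hM, EuclideanSpace.sum_filter_ne_smul_single_add_single_apply_smul h0k]
    simp [h0k, smul_sub]
  have hMw : M (WithLp.toLp 2 (0, w)) = A w := by simpa using hM 0 w
  have hφ_norm : ‖φp‖ = 1 := by
    rw [hφp, WithLp.equiv_symm_apply, WithLp.norm_toLp_fst, norm_smul,
      EuclideanSpace.norm_single_add_single h0k]
    simp [abs_of_pos (show (0 : ℝ) < √2 by positivity)]
  have hφ_orth : ⟪φp, WithLp.toLp 2 (0, w)⟫_ℂ = 0 := by simp [hφp]
  rw [WithLp.equiv_symm_apply] at hψ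
  constructor
  · have hscalar : (√2 * ε / √Wp) * (√2)⁻¹ = ε / √Wp := by field_simp
    rw [hψ, map_sub, map_smul, hMφ, hMw, hw, smul_smul, ← Complex.ofReal_mul, hscalar, sub_self]
  · rw [hψ]
    refine one_sub_sq_mul_norm_sub_sq_le_norm_inner_sq hφ_norm ?_ ?_
    · rw [inner_smul_right, hφ_orth, mul_zero]
    · rw [norm_smul, WithLp.norm_toLp_snd, ← norm_smul]
      exact norm_ofReal_div_sqrt_smul_sq_le hwnorm ε

/-- Setup of Theorem 4 (span-program compilation):  `M : ℂ^{m+1} ⊕ H → V` is the map with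
columns `(√2 ε/√W⁺) z₀, −(√2 ε/√W⁺) z₁, …, −(√2 ε/√W⁺) z_m` on the `ℂ^{m+1}` summand and `A`
on the `H` summand.  If `w` is a positive witness, i.e. `A w = z₀ − z_k` and `‖w‖² ≤ W⁺`, and
`ψ := φ₊ − (ε/√W⁺)·(0, w)` with `φ₊ := ((e₀ + e_k)/√2, 0)`, then `M ψ = 0` and
`|⟨φ₊, ψ⟩|² ≥ (1 − ε²)·‖ψ‖²`. -/
theorem positive_witness_kernel_overlap
    {V H : Type*}
    [NormedAddCommGroup V] [InnerProductSpace ℂ V] [FiniteDimensional ℂ V]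
    [NormedAddCommGroup H] [InnerProductSpace ℂ H] [FiniteDimensional ℂ H]
    (A : H →ₗ[ℂ] V) (ε Wp : ℝ) (hε : 0 < ε) (hWp : 0 < Wp)
    (m : ℕ) (hm : 1 ≤ m) (k : Fin (m + 1)) (hk : k ≠ 0)
    (z : Fin (m + 1) → V)
    (M : WithLp 2 (EuclideanSpace ℂ (Fin (m + 1)) × H) →ₗ[ℂ] V)
    (hM : ∀ (c : EuclideanSpace ℂ (Fin (m + 1))) (h : H),
      M ((WithLp.equiv 2 (EuclideanSpace ℂ (Fin (m + 1)) × H)).symm (c, h)) =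
        ((Real.sqrt 2 * ε / Real.sqrt Wp : ℝ) : ℂ) •
          (c 0 • z 0 - ∑ α ∈ Finset.univ.filter (fun α : Fin (m + 1) => α ≠ 0), c α • z α)
        + A h)
    (w : H) (hw : A w = z 0 - z k) (hwnorm : ‖w‖ ^ 2 ≤ Wp)
    (φp ψ : WithLp 2 (EuclideanSpace ℂ (Fin (m + 1)) × H))
    (hφp : φp = (WithLp.equiv 2 (EuclideanSpace ℂ (Fin (m + 1)) × H)).symm
      ((((Real.sqrt 2)⁻¹ : ℝ) : ℂ) •
        (EuclideanSpace.single 0 1 + EuclideanSpace.single k 1), 0))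
    (hψ : ψ = φp - ((ε / Real.sqrt Wp : ℝ) : ℂ) •
      (WithLp.equiv 2 (EuclideanSpace ℂ (Fin (m + 1)) × H)).symm (0, w)) :
    M ψ = 0 ∧ (1 - ε ^ 2) * ‖ψ‖ ^ 2 ≤ ‖⟪φp, ψ⟫_ℂ‖ ^ 2 :=
  positive_witness_kernel_overlap_general A ε Wp m k hk z M hM w hw hwnorm φp ψ hφp hψ
end

section
/- Suppose w ∈ H satisfies A w = z₀ − z_k and ‖w‖² ≤ W⁺, set ψ := φ₊ − (ε/√W⁺)·(0, w), and let Π be an orthogonal projection on ℂ^{m+1} ⊕ H with Π ψ = ψ. Let Λ be the orthogonal projection onto ker M, let U = (2Π − I)(2Λ − I), and let P₀ be the orthogonal projection onto the fixed space {u : U u = u} of U. Then ‖P₀ φ₊‖² ≥ 1 − ε². -/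
/-!
The defect ψ lies in `ker M`: the `M`-images of `φ₊` and of the correction `(ε/√W⁺)(0, w)` are
both `(ε/√W⁺)(z₀ − z_k)`. So ψ is fixed by both reflections `2Λ − I` and `2Π − I`, hence by `U`,
and `P₀ ψ = ψ`. Since `⟪ψ, φ₊⟫ = 1` and `‖ψ‖² = 1 + (ε²/W⁺)‖w‖² ≤ 1 + ε²`, Cauchy–Schwarz
applied to `⟪ψ, P₀ φ₊⟫ = ⟪P₀ ψ, φ₊⟫ = 1` gives `‖P₀ φ₊‖² ≥ 1/(1 + ε²) ≥ 1 − ε²`.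
-/

open scoped InnerProductSpace

noncomputable section

open Finset

theorem reflection_comp_reflection_apply_eq_self {R M : Type*} [Semiring R] [AddCommGroup M]
    [Module R M] {P Q : M →ₗ[R] M} {x : M} (hP : P x = x) (hQ : Q x = x) :
    ((2 • P - LinearMap.id) ∘ₗ (2 • Q - LinearMap.id)) x = x := by
  simp [hP, hQ, two_nsmul]

section SymmetricOperator

variable {𝕜 E : Type*} [RCLike 𝕜] [NormedAddCommGroup E] [InnerProductSpace 𝕜 E]
  {P : E →ₗ[𝕜] E} {ψ φ : E}

theorem one_le_norm_mul_norm_apply_of_inner_eq_one (hP : ∀ x y, ⟪P x, y⟫_𝕜 = ⟪x, P y⟫_𝕜)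
    (hψ : P ψ = ψ) (hψφ : ⟪ψ, φ⟫_𝕜 = 1) : 1 ≤ ‖ψ‖ * ‖P φ‖ := by
  have h : ⟪ψ, P φ⟫_𝕜 = 1 := by rw [← hP, hψ, hψφ]
  simpa [h] using norm_inner_le_norm (𝕜 := 𝕜) ψ (P φ)

theorem one_sub_le_norm_apply_sq_of_inner_eq_one (hP : ∀ x y, ⟪P x, y⟫_𝕜 = ⟪x, P y⟫_𝕜)
    (hψ : P ψ = ψ) (hψφ : ⟪ψ, φ⟫_𝕜 = 1) {t : ℝ} (ht : ‖ψ‖ ^ 2 ≤ 1 + t) :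
    1 - t ≤ ‖P φ‖ ^ 2 := by
  have h := one_le_norm_mul_norm_apply_of_inner_eq_one hP hψ hψφ
  have h1 : 1 ≤ (1 + t) * ‖P φ‖ ^ 2 := by
    nlinarith [mul_le_mul_of_nonneg_right ht (sq_nonneg ‖P φ‖), norm_nonneg ψ, norm_nonneg (P φ)]
  have hpos : 0 < 1 + t := pos_of_mul_pos_left (one_pos.trans_le h1) (sq_nonneg _)
  by_contra! hlt
  -- `(1 + t) ‖P φ‖² < (1 + t)(1 - t) = 1 - t² ≤ 1`
  nlinarith [mul_lt_mul_of_pos_left hlt hpos, sq_nonneg t]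

end SymmetricOperator

section SingleAddSingle

variable {𝕜 ι : Type*} [RCLike 𝕜] [Fintype ι] [DecidableEq ι]

theorem EuclideanSpace.norm_single_one_add_single_one {i j : ι} (hij : i ≠ j) :
    ‖(EuclideanSpace.single i 1 + EuclideanSpace.single j 1 : EuclideanSpace 𝕜 ι)‖ = √2 := by
  rw [← sq_eq_sq₀ (norm_nonneg _) (Real.sqrt_nonneg _), Real.sq_sqrt zero_le_two, sq,
    norm_add_sq_eq_norm_sq_add_norm_sq_of_inner_eq_zero (𝕜 := 𝕜)]
  · norm_num
  · simp [EuclideanSpace.inner_single_left, hij.symm]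

theorem EuclideanSpace.smul_single_add_single_apply_smul_sub_sum {V : Type*} [AddCommGroup V]
    [Module 𝕜 V] {i₀ k : ι} (hk : k ≠ i₀) (s : 𝕜) (z : ι → V) :
    (s • (EuclideanSpace.single i₀ 1 + EuclideanSpace.single k 1) : EuclideanSpace 𝕜 ι) i₀ • z i₀ -
      ∑ α ∈ univ.filter (· ≠ i₀),
        (s • (EuclideanSpace.single i₀ 1 + EuclideanSpace.single k 1) : EuclideanSpace 𝕜 ι) α • z α =
      s • (z i₀ - z k) := by
  rw [sum_eq_single_of_mem k (by simp [hk])]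
  · simp [hk, hk.symm, smul_sub]
  · intro b hb hbk
    simp [(mem_filter.mp hb).2, hbk]

end SingleAddSingle

theorem fixed_space_overlap_general
    {V H : Type*}
    [NormedAddCommGroup V] [InnerProductSpace ℂ V]
    [NormedAddCommGroup H] [InnerProductSpace ℂ H]
    (A : H →ₗ[ℂ] V) (ε Wp : ℝ) (hWp : 0 < Wp)
    (m : ℕ) (k : Fin (m + 1)) (hk : k ≠ 0)
    (z : Fin (m + 1) → V)
    (M : WithLp 2 (EuclideanSpace ℂ (Fin (m + 1)) × H) →ₗ[ℂ] V)
    (hM : ∀ (c : EuclideanSpace ℂ (Fin (m + 1))) (h : H),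
      M ((WithLp.equiv 2 (EuclideanSpace ℂ (Fin (m + 1)) × H)).symm (c, h)) =
        ((Real.sqrt 2 * ε / Real.sqrt Wp : ℝ) : ℂ) •
          (c 0 • z 0 - ∑ α ∈ Finset.univ.filter (fun α : Fin (m + 1) => α ≠ 0), c α • z α)
        + A h)
    (w : H) (hw : A w = z 0 - z k) (hwnorm : ‖w‖ ^ 2 ≤ Wp)
    (φp ψ : WithLp 2 (EuclideanSpace ℂ (Fin (m + 1)) × H))
    (hφp : φp = (WithLp.equiv 2 (EuclideanSpace ℂ (Fin (m + 1)) × H)).symm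
      ((((Real.sqrt 2)⁻¹ : ℝ) : ℂ) •
        (EuclideanSpace.single 0 1 + EuclideanSpace.single k 1), 0))
    (hψ : ψ = φp - ((ε / Real.sqrt Wp : ℝ) : ℂ) •
      (WithLp.equiv 2 (EuclideanSpace ℂ (Fin (m + 1)) × H)).symm (0, w))
    (Pi Lam U P0 : WithLp 2 (EuclideanSpace ℂ (Fin (m + 1)) × H) →ₗ[ℂ]
      WithLp 2 (EuclideanSpace ℂ (Fin (m + 1)) × H))
    (hPiψ : Pi ψ = ψ)
    (hLam : IsOrthProj Lam) (hLamrange : LinearMap.range Lam = LinearMap.ker M)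
    (hU : U = (2 • Pi - LinearMap.id) ∘ₗ (2 • Lam - LinearMap.id))
    (hP0 : IsOrthProj P0)
    (hP0range : LinearMap.range P0 = LinearMap.ker (U - LinearMap.id)) :
    1 - ε ^ 2 ≤ ‖P0 φp‖ ^ 2 := by
  set c : EuclideanSpace ℂ (Fin (m + 1)) :=
    (((√2)⁻¹ : ℝ) : ℂ) • (EuclideanSpace.single 0 1 + EuclideanSpace.single k 1)
  have hc : ‖c‖ = 1 := by
    rw [norm_smul, EuclideanSpace.norm_single_one_add_single_one hk.symm, Complex.norm_real,
      Real.norm_eq_abs, abs_inv, abs_of_pos (by positivity), inv_mul_cancel₀ (by positivity)]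
  have hMψ : M ψ = 0 := by
    have hr : ((√2 * ε / √Wp : ℝ) : ℂ) * (((√2)⁻¹ : ℝ) : ℂ) = ((ε / √Wp : ℝ) : ℂ) := by
      rw [← Complex.ofReal_mul]; congr 1; field_simp
    rw [hψ, hφp, map_sub, map_smul, hM, hM,
      EuclideanSpace.smul_single_add_single_apply_smul_sub_sum hk]
    simp only [smul_smul, hr]
    simp [hw]
  have hψ_fixed : P0 ψ = ψ := by
    have hLamψ : Lam ψ = ψ :=
      (LinearMap.IsIdempotentElem.mem_range_iff hLam.1).mp (hLamrange ▸ hMψ)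
    have hUψ : U ψ = ψ := hU ▸ reflection_comp_reflection_apply_eq_self hPiψ hLamψ
    exact (LinearMap.IsIdempotentElem.mem_range_iff hP0.1).mp
      (hP0range ▸ LinearMap.mem_ker.mpr (by simp [hUψ]))
  have hψφ : ⟪ψ, φp⟫_ℂ = 1 := by
    simp [hψ, hφp, WithLp.prod_inner_apply, inner_self_eq_norm_sq_to_K, hc]
  have hψnorm : ‖ψ‖ ^ 2 ≤ 1 + ε ^ 2 := by
    have hδ : ε ^ 2 / Wp * ‖w‖ ^ 2 ≤ ε ^ 2 := by
      rw [div_mul_eq_mul_div, div_le_iff₀ hWp]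
      exact mul_le_mul_of_nonneg_left hwnorm (sq_nonneg ε)
    simpa [hψ, hφp, WithLp.prod_norm_sq_eq_of_L2, hc, norm_smul, mul_pow, div_pow,
      Real.sq_sqrt hWp.le] using hδ
  exact one_sub_le_norm_apply_sq_of_inner_eq_one hP0.2 hψ_fixed hψφ hψnorm

/-- If `w` is a positive witness (`A w = z₀ − z_k`, `‖w‖² ≤ W⁺`), `ψ := φ₊ − (ε/√W⁺)(0,w)`,
`Π` is an orthogonal projection with `Π ψ = ψ`, `Λ` is the orthogonal projection onto `ker M`,
`U = (2Π − I)(2Λ − I)`, and `P₀` is the orthogonal projection onto the fixed space of `U`,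
then `‖P₀ φ₊‖² ≥ 1 − ε²`. -/
theorem fixed_space_overlap
    {V H : Type*}
    [NormedAddCommGroup V] [InnerProductSpace ℂ V] [FiniteDimensional ℂ V]
    [NormedAddCommGroup H] [InnerProductSpace ℂ H] [FiniteDimensional ℂ H]
    (A : H →ₗ[ℂ] V) (ε Wp : ℝ) (hε : 0 < ε) (hWp : 0 < Wp)
    (m : ℕ) (hm : 1 ≤ m) (k : Fin (m + 1)) (hk : k ≠ 0)
    (z : Fin (m + 1) → V)
    (M : WithLp 2 (EuclideanSpace ℂ (Fin (m + 1)) × H) →ₗ[ℂ] V)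
    (hM : ∀ (c : EuclideanSpace ℂ (Fin (m + 1))) (h : H),
      M ((WithLp.equiv 2 (EuclideanSpace ℂ (Fin (m + 1)) × H)).symm (c, h)) =
        ((Real.sqrt 2 * ε / Real.sqrt Wp : ℝ) : ℂ) •
          (c 0 • z 0 - ∑ α ∈ Finset.univ.filter (fun α : Fin (m + 1) => α ≠ 0), c α • z α)
        + A h)
    (w : H) (hw : A w = z 0 - z k) (hwnorm : ‖w‖ ^ 2 ≤ Wp)
    (φp ψ : WithLp 2 (EuclideanSpace ℂ (Fin (m + 1)) × H))
    (hφp : φp = (WithLp.equiv 2 (EuclideanSpace ℂ (Fin (m + 1)) × H)).symm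
      ((((Real.sqrt 2)⁻¹ : ℝ) : ℂ) •
        (EuclideanSpace.single 0 1 + EuclideanSpace.single k 1), 0))
    (hψ : ψ = φp - ((ε / Real.sqrt Wp : ℝ) : ℂ) •
      (WithLp.equiv 2 (EuclideanSpace ℂ (Fin (m + 1)) × H)).symm (0, w))
    (Pi Lam U P0 : WithLp 2 (EuclideanSpace ℂ (Fin (m + 1)) × H) →ₗ[ℂ]
      WithLp 2 (EuclideanSpace ℂ (Fin (m + 1)) × H))
    (hPi : IsOrthProj Pi) (hPiψ : Pi ψ = ψ)
    (hLam : IsOrthProj Lam) (hLamrange : LinearMap.range Lam = LinearMap.ker M)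
    (hU : U = (2 • Pi - LinearMap.id) ∘ₗ (2 • Lam - LinearMap.id))
    (hP0 : IsOrthProj P0)
    (hP0range : LinearMap.range P0 = LinearMap.ker (U - LinearMap.id)) :
    1 - ε ^ 2 ≤ ‖P0 φp‖ ^ 2 :=
  fixed_space_overlap_general A ε Wp hWp m k hk z M hM w hw hwnorm φp ψ hφp hψ Pi Lam U P0 hPiψ hLam
    hLamrange hU hP0 hP0range

end
end

section
/- Suppose w̄ ∈ V satisfies: the inner product of w̄ with z₀ equals 1, and the inner product of w̄ with z_α equals 1 if α = k and 0 otherwise (for α = 1, …, m). Set ψ̄ := ((e₀ − e_k)/√2, (√W⁺/(2ε))·A†w̄) ∈ ℂ^{m+1} ⊕ H, where A† is the adjoint of A. Then ψ̄ is orthogonal to ker M. -/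
open scoped InnerProductSpace

/-! Pairing `w̄` with `M (c, h)` shows `M† w̄ = ((√2 ε / √W⁺) · (e₀ - e_k), A† w̄)`,
so `ψ̄ = (√W⁺ / (2ε)) · M† w̄` lies in the range of `M†`, which is orthogonal to `ker M`. -/

open Finset

theorem inner_smul_sub_sum_eq_of_inner_eq_ite {V ι : Type*}
    [NormedAddCommGroup V] [InnerProductSpace ℂ V] [Fintype ι] [DecidableEq ι]
    {w : V} {z : ι → V} {i₀ k : ι} (hk : k ≠ i₀) (h₀ : ⟪w, z i₀⟫_ℂ = 1)
    (hw : ∀ α, α ≠ i₀ → ⟪w, z α⟫_ℂ = if α = k then 1 else 0) (c : ι → ℂ) :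
    ⟪w, c i₀ • z i₀ - ∑ α ∈ univ.filter (fun α => α ≠ i₀), c α • z α⟫_ℂ = c i₀ - c k := by
  have hsum : ∑ α ∈ univ.filter (fun α => α ≠ i₀), c α * ⟪w, z α⟫_ℂ = c k := by
    rw [sum_congr rfl fun α hα => by rw [hw α (mem_filter.mp hα).2, mul_ite, mul_one, mul_zero],
      sum_ite_eq']
    simp [hk]
  rw [inner_sub_right, inner_smul_right, h₀, mul_one, inner_sum]
  simp_rw [inner_smul_right]
  rw [hsum]

theorem sqrt_div_two_mul_mul_sqrt_two_mul_div_sqrt {ε W : ℝ} (hε : 0 < ε) (hW : 0 < W) :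
    Real.sqrt W / (2 * ε) * (Real.sqrt 2 * ε / Real.sqrt W) = (Real.sqrt 2)⁻¹ := by
  have hsqrt2 : Real.sqrt 2 * Real.sqrt 2 = 2 := Real.mul_self_sqrt (by norm_num)
  field_simp
  linarith

theorem negative_witness_orthogonal_kernel_general
    {V H : Type*}
    [NormedAddCommGroup V] [InnerProductSpace ℂ V] [FiniteDimensional ℂ V]
    [NormedAddCommGroup H] [InnerProductSpace ℂ H] [FiniteDimensional ℂ H]
    (A : H →ₗ[ℂ] V) (ε Wp : ℝ) (hε : 0 < ε) (hWp : 0 < Wp)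
    (m : ℕ) (k : Fin (m + 1)) (hk : k ≠ 0)
    (z : Fin (m + 1) → V)
    (M : WithLp 2 (EuclideanSpace ℂ (Fin (m + 1)) × H) →ₗ[ℂ] V)
    (hM : ∀ (c : EuclideanSpace ℂ (Fin (m + 1))) (h : H),
      M ((WithLp.equiv 2 (EuclideanSpace ℂ (Fin (m + 1)) × H)).symm (c, h)) =
        ((Real.sqrt 2 * ε / Real.sqrt Wp : ℝ) : ℂ) •
          (c 0 • z 0 - ∑ α ∈ Finset.univ.filter (fun α : Fin (m + 1) => α ≠ 0), c α • z α)
        + A h)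
    (wbar : V) (hwbar0 : ⟪wbar, z 0⟫_ℂ = 1)
    (hwbar : ∀ α : Fin (m + 1), α ≠ 0 → ⟪wbar, z α⟫_ℂ = if α = k then 1 else 0)
    (ψbar : WithLp 2 (EuclideanSpace ℂ (Fin (m + 1)) × H))
    (hψbar : ψbar = (WithLp.equiv 2 (EuclideanSpace ℂ (Fin (m + 1)) × H)).symm
      ((((Real.sqrt 2)⁻¹ : ℝ) : ℂ) •
        (EuclideanSpace.single 0 1 - EuclideanSpace.single k 1),
       ((Real.sqrt Wp / (2 * ε) : ℝ) : ℂ) • LinearMap.adjoint A wbar)) :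
    ∀ v ∈ LinearMap.ker M, ⟪ψbar, v⟫_ℂ = 0 := by
  have hψ : ψbar = ((Real.sqrt Wp / (2 * ε) : ℝ) : ℂ) • LinearMap.adjoint M wbar := by
    refine ext_inner_right ℂ fun v => ?_
    obtain ⟨⟨c, h⟩, rfl⟩ := (WithLp.equiv 2 _).symm.surjective v
    rw [inner_smul_left, LinearMap.adjoint_inner_left, hM, inner_add_right, inner_smul_right,
      inner_smul_sub_sum_eq_of_inner_eq_ite hk hwbar0 hwbar, ← LinearMap.adjoint_inner_left, hψbar,
      WithLp.prod_inner_apply]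
    simp only [WithLp.equiv_symm_apply, WithLp.ofLp_toLp]
    rw [inner_smul_left, inner_sub_left, EuclideanSpace.inner_single_left,
      EuclideanSpace.inner_single_left, inner_smul_left]
    have hscale := congrArg (fun x : ℝ => (x : ℂ))
      (sqrt_div_two_mul_mul_sqrt_two_mul_div_sqrt hε hWp)
    simp only [map_one, one_mul, Complex.conj_ofReal, Complex.ofReal_mul] at hscale ⊢
    linear_combination (c k - c 0) * hscale
  intro v hv
  rw [hψ, inner_smul_left, LinearMap.adjoint_inner_left, LinearMap.mem_ker.mp hv, inner_zero_right,
    mul_zero]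

/-- If `w̄` is a negative witness, i.e. `⟨w̄, z₀⟩ = 1` and `⟨w̄, z_α⟩ = δ_{kα}` for
`α = 1, …, m`, then `ψ̄ := ((e₀ − e_k)/√2, (√W⁺/(2ε))·A†w̄)` is orthogonal to `ker M`. -/
theorem negative_witness_orthogonal_kernel
    {V H : Type*}
    [NormedAddCommGroup V] [InnerProductSpace ℂ V] [FiniteDimensional ℂ V]
    [NormedAddCommGroup H] [InnerProductSpace ℂ H] [FiniteDimensional ℂ H]
    (A : H →ₗ[ℂ] V) (ε Wp : ℝ) (hε : 0 < ε) (hWp : 0 < Wp)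
    (m : ℕ) (hm : 1 ≤ m) (k : Fin (m + 1)) (hk : k ≠ 0)
    (z : Fin (m + 1) → V)
    (M : WithLp 2 (EuclideanSpace ℂ (Fin (m + 1)) × H) →ₗ[ℂ] V)
    (hM : ∀ (c : EuclideanSpace ℂ (Fin (m + 1))) (h : H),
      M ((WithLp.equiv 2 (EuclideanSpace ℂ (Fin (m + 1)) × H)).symm (c, h)) =
        ((Real.sqrt 2 * ε / Real.sqrt Wp : ℝ) : ℂ) •
          (c 0 • z 0 - ∑ α ∈ Finset.univ.filter (fun α : Fin (m + 1) => α ≠ 0), c α • z α)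
        + A h)
    (wbar : V) (hwbar0 : ⟪wbar, z 0⟫_ℂ = 1)
    (hwbar : ∀ α : Fin (m + 1), α ≠ 0 → ⟪wbar, z α⟫_ℂ = if α = k then 1 else 0)
    (ψbar : WithLp 2 (EuclideanSpace ℂ (Fin (m + 1)) × H))
    (hψbar : ψbar = (WithLp.equiv 2 (EuclideanSpace ℂ (Fin (m + 1)) × H)).symm
      ((((Real.sqrt 2)⁻¹ : ℝ) : ℂ) •
        (EuclideanSpace.single 0 1 - EuclideanSpace.single k 1),
       ((Real.sqrt Wp / (2 * ε) : ℝ) : ℂ) • LinearMap.adjoint A wbar)) :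
    ∀ v ∈ LinearMap.ker M, ⟪ψbar, v⟫_ℂ = 0 :=
  negative_witness_orthogonal_kernel_general A ε Wp hε hWp m k hk z M hM wbar hwbar0 hwbar ψbar
    hψbar
end

section
/- Suppose w̄ ∈ V satisfies: the inner product of w̄ with z₀ equals 1, and the inner product of w̄ with z_α equals 1 if α = k and 0 otherwise (for α = 1, …, m). Set ψ̄ := ((e₀ − e_k)/√2, (√W⁺/(2ε))·A†w̄). Let H₀ ⊆ H be a subspace with A†w̄ orthogonal to H₀, and let Π be the orthogonal projection on ℂ^{m+1} ⊕ H acting as the identity on the ℂ^{m+1} summand and as the orthogonal projection onto H₀ on the H summand. Let Λ be the orthogonal projection onto ker M, U = (2Π − I)(2Λ − I), and for Θ ∈ [0, π] let P_Θ be the orthogonal projection onto the span of all eigenvectors of U with eigenvalue e^{iθ}, θ ∈ (−π, π], |θ| ≤ Θ. If W⁻ ≥ ‖A†w̄‖² and W := √(W⁺·W⁻), then Π ψ̄ = φ₋ and ‖P_Θ φ₋‖² ≤ (Θ²/4)·(1 + W²/(4ε²)). -/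
/-!
Since `Λ ψ̄ = 0`, the reflection `2Λ - I` sends `ψ̄` to `-ψ̄`, so `U ψ̄ = ψ̄ - 2 Π ψ̄`, that is
`φ₋ = Π ψ̄ = (ψ̄ - U ψ̄) / 2`. As a product of two reflections `U` preserves inner products, so
an eigenvector `u` of `U` with eigenvalue `μ = e^{iθ}` satisfies `⟪u, (I - U) ψ̄⟫ = (1 - μ) ⟪u, ψ̄⟫`
with `|1 - μ| ≤ |θ|`. Expanding `P_Θ φ₋` along the mutually orthogonal eigenspaces then gives
`‖P_Θ φ₋‖ ≤ (Θ / 2) ‖ψ̄‖`, and `‖ψ̄‖² = 1 + W⁺ ‖A†w̄‖² / (4ε²)`.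
Finally `Λ ψ̄ = 0` because `ψ̄ ⊥ ker M`: pairing `M (c, h)` with `w̄` gives `√2 ε / √W⁺ · (c₀ - c_k) +
⟪A†w̄, h⟫`, which is `⟪ψ̄, (c, h)⟫` up to the factor `√W⁺ / (2ε)`.
-/

open scoped InnerProductSpace

noncomputable section

open Module.End

namespace IsOrthProj

variable {E : Type*} [NormedAddCommGroup E] [InnerProductSpace ℂ E] {P : E →ₗ[ℂ] E}

lemma apply_apply (hP : IsOrthProj P) (x : E) : P (P x) = P x :=
  LinearMap.congr_fun hP.1 x

lemma inner_apply_self (hP : IsOrthProj P) (x : E) : ⟪P x, x⟫_ℂ = (‖P x‖ : ℂ) ^ 2 := by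
  have h := hP.2 (P x) x
  rw [hP.apply_apply] at h
  exact h.trans (inner_self_eq_norm_sq_to_K _)

lemma apply_eq_zero_of_forall_inner_eq_zero (hP : IsOrthProj P) {ψ : E}
    (h : ∀ x ∈ LinearMap.range P, ⟪ψ, x⟫_ℂ = 0) : P ψ = 0 := by
  refine (inner_self_eq_zero (𝕜 := ℂ)).mp ?_
  rw [hP.2, hP.apply_apply]
  exact h _ (LinearMap.mem_range_self P ψ)

lemma inner_two_smul_sub (hP : IsOrthProj P) (x y : E) :
    ⟪2 • P x - x, 2 • P y - y⟫_ℂ = ⟪x, y⟫_ℂ := by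
  have hxy : ⟪P x, P y⟫_ℂ = ⟪x, P y⟫_ℂ := by rw [hP.2, hP.apply_apply]
  simp only [two_smul, inner_sub_left, inner_sub_right, inner_add_left, inner_add_right, hxy,
    hP.2 x y]
  ring

end IsOrthProj

section Reflections

variable {E : Type*} [NormedAddCommGroup E] [InnerProductSpace ℂ E] {Pi Lam U : E →ₗ[ℂ] E}

lemma inner_map_map_of_eq_reflection_comp (hPi : IsOrthProj Pi) (hLam : IsOrthProj Lam)
    (hU : U = (2 • Pi - LinearMap.id) ∘ₗ (2 • Lam - LinearMap.id)) (x y : E) :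
    ⟪U x, U y⟫_ℂ = ⟪x, y⟫_ℂ := by
  subst hU
  exact (hPi.inner_two_smul_sub _ _).trans (hLam.inner_two_smul_sub x y)

lemma two_smul_apply_eq_sub_of_eq_reflection_comp
    (hU : U = (2 • Pi - LinearMap.id) ∘ₗ (2 • Lam - LinearMap.id)) {ψ : E} (hψ : Lam ψ = 0) :
    2 • Pi ψ = ψ - U ψ := by
  subst hU
  simp [hψ]

end Reflections

section Isometry

variable {E : Type*} [NormedAddCommGroup E] [InnerProductSpace ℂ E] {U : E →ₗ[ℂ] E}

lemma inner_map_right_eq_mul_of_mem_eigenspace (hU : ∀ x y, ⟪U x, U y⟫_ℂ = ⟪x, y⟫_ℂ)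
    {μ : ℂ} (hμ : ‖μ‖ = 1) {u : E} (hu : u ∈ eigenspace U μ) (ψ : E) :
    ⟪u, U ψ⟫_ℂ = μ * ⟪u, ψ⟫_ℂ := by
  have hμμ : μ * starRingEnd ℂ μ = 1 := by
    rw [Complex.mul_conj, Complex.normSq_eq_norm_sq, hμ]
    norm_num
  have h := hU u ψ
  rw [mem_eigenspace_iff.mp hu, inner_smul_left] at h
  linear_combination μ * h - ⟪u, U ψ⟫_ℂ * hμμ

lemma orthogonalFamily_eigenspaces_of_isometry (hU : ∀ x y, ⟪U x, U y⟫_ℂ = ⟪x, y⟫_ℂ)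
    {S : Set ℂ} (hS : ∀ μ ∈ S, ‖μ‖ = 1) :
    OrthogonalFamily ℂ (fun μ : S => eigenspace U μ) fun μ => (eigenspace U μ).subtypeₗᵢ := by
  rintro μ ν hne ⟨u, hu⟩ ⟨v, hv⟩
  have h := inner_map_right_eq_mul_of_mem_eigenspace hU (hS μ μ.2) hu v
  rw [mem_eigenspace_iff.mp hv, inner_smul_right] at h
  have hνμ : (ν : ℂ) - μ ≠ 0 := sub_ne_zero.mpr (Subtype.coe_injective.ne hne.symm)
  exact (mul_eq_zero.mp (by linear_combination h : ((ν : ℂ) - μ) * ⟪u, v⟫_ℂ = 0)).resolve_left hνμ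

lemma norm_inner_sub_map_le (hU : ∀ x y, ⟪U x, U y⟫_ℂ = ⟪x, y⟫_ℂ) {S : Set ℂ} {r : ℝ}
    (hr : 0 ≤ r) (hS : ∀ μ ∈ S, ‖μ‖ = 1 ∧ ‖μ - 1‖ ≤ r) {v : E}
    (hv : v ∈ Submodule.span ℂ {u | ∃ μ ∈ S, U u = μ • u}) (ψ : E) :
    ‖⟪v, ψ - U ψ⟫_ℂ‖ ≤ r * ‖v‖ * ‖ψ‖ := by
  have hspan : Submodule.span ℂ {u | ∃ μ ∈ S, U u = μ • u} ≤ ⨆ μ : S, eigenspace U μ :=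
    Submodule.span_le.mpr fun u ⟨μ, hμ, hu⟩ =>
      Submodule.mem_iSup_of_mem ⟨μ, hμ⟩ (mem_eigenspace_iff.mpr hu)
  obtain ⟨f, hf, hfv⟩ := (Submodule.mem_iSup_iff_exists_finsupp _ v).mp (hspan hv)
  have horth := orthogonalFamily_eigenspaces_of_isometry hU fun μ hμ => (hS μ hμ).1
  set w := ∑ μ ∈ f.support, starRingEnd ℂ (1 - μ) • f μ
  have hvw : ⟪v, ψ - U ψ⟫_ℂ = ⟪w, ψ⟫_ℂ := by
    rw [← hfv]
    simp only [w, Finsupp.sum, sum_inner, inner_sub_right, inner_smul_left, Complex.conj_conj]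
    rw [← Finset.sum_sub_distrib]
    refine Finset.sum_congr rfl fun μ _ => ?_
    rw [inner_map_right_eq_mul_of_mem_eigenspace hU (hS μ μ.2).1 (hf μ)]
    ring
  have hv_norm : ‖v‖ ^ 2 = ∑ μ ∈ f.support, ‖f μ‖ ^ 2 :=
    hfv ▸ horth.norm_sum (fun μ => ⟨f μ, hf μ⟩) f.support
  have hw_norm : ‖w‖ ^ 2 = ∑ μ ∈ f.support, ‖starRingEnd ℂ (1 - μ) • f μ‖ ^ 2 :=
    horth.norm_sum (fun μ => ⟨_, Submodule.smul_mem _ _ (hf μ)⟩) f.support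
  have hw : ‖w‖ ≤ r * ‖v‖ := by
    rw [← pow_le_pow_iff_left₀ (norm_nonneg _) (by positivity) two_ne_zero, mul_pow, hw_norm,
      hv_norm, Finset.mul_sum]
    gcongr with μ
    rw [norm_smul, Complex.norm_conj, mul_pow, norm_sub_rev]
    gcongr
    exact (hS μ μ.2).2
  calc ‖⟪v, ψ - U ψ⟫_ℂ‖ = ‖⟪w, ψ⟫_ℂ‖ := by rw [hvw]
    _ ≤ ‖w‖ * ‖ψ‖ := norm_inner_le_norm _ _
    _ ≤ r * ‖v‖ * ‖ψ‖ := by gcongr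

lemma IsOrthProj.norm_apply_le_of_two_smul_eq_sub {P : E →ₗ[ℂ] E} (hP : IsOrthProj P)
    (hU : ∀ x y, ⟪U x, U y⟫_ℂ = ⟪x, y⟫_ℂ) {S : Set ℂ} {r : ℝ} (hr : 0 ≤ r)
    (hS : ∀ μ ∈ S, ‖μ‖ = 1 ∧ ‖μ - 1‖ ≤ r)
    (hrange : LinearMap.range P ≤ Submodule.span ℂ {u | ∃ μ ∈ S, U u = μ • u})
    {φ ψ : E} (hφ : 2 • φ = ψ - U ψ) : ‖P φ‖ ≤ r / 2 * ‖ψ‖ := by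
  have h := norm_inner_sub_map_le hU hr hS (hrange (LinearMap.mem_range_self P φ)) ψ
  have hinner : ⟪P φ, ψ - U ψ⟫_ℂ = ((2 * ‖P φ‖ ^ 2 : ℝ) : ℂ) := by
    rw [← hφ, two_smul, inner_add_right, hP.inner_apply_self]
    push_cast
    ring
  rw [hinner, Complex.norm_real, Real.norm_of_nonneg (by positivity)] at h
  rcases (norm_nonneg (P φ)).eq_or_lt with h0 | hpos
  · rw [← h0]
    positivity
  · nlinarith

lemma IsOrthProj.norm_apply_le_of_range_le_span_phase {P : E →ₗ[ℂ] E} (hP : IsOrthProj P)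
    (hU : ∀ x y, ⟪U x, U y⟫_ℂ = ⟪x, y⟫_ℂ) {Θ : ℝ}
    (hrange : LinearMap.range P ≤
      Submodule.span ℂ {u | ∃ θ : ℝ, |θ| ≤ Θ ∧ U u = Complex.exp (θ * Complex.I) • u})
    {φ ψ : E} (hφ : 2 • φ = ψ - U ψ) : ‖P φ‖ ≤ |Θ| / 2 * ‖ψ‖ := by
  refine hP.norm_apply_le_of_two_smul_eq_sub hU (abs_nonneg Θ)
    (S := (fun θ : ℝ => Complex.exp (θ * Complex.I)) '' {θ | |θ| ≤ Θ}) ?_ ?_ hφ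
  · rintro _ ⟨θ, hθ : |θ| ≤ Θ, rfl⟩
    refine ⟨Complex.norm_exp_ofReal_mul_I θ, ?_⟩
    calc ‖Complex.exp (θ * Complex.I) - 1‖ = ‖Complex.exp (Complex.I * θ) - 1‖ := by rw [mul_comm]
      _ ≤ ‖θ‖ := Real.norm_exp_I_mul_ofReal_sub_one_le
      _ ≤ |Θ| := hθ.trans (le_abs_self Θ)
  · refine hrange.trans (Submodule.span_mono ?_)
    rintro u ⟨θ, hθ, hu⟩
    exact ⟨_, ⟨θ, hθ, rfl⟩, hu⟩

end Isometry

lemma isOrthProj_of_apply_toLp {F G : Type*} [NormedAddCommGroup F] [InnerProductSpace ℂ F]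
    [NormedAddCommGroup G] [InnerProductSpace ℂ G] {K : Submodule ℂ G}
    [K.HasOrthogonalProjection] {Pi : WithLp 2 (F × G) →ₗ[ℂ] WithLp 2 (F × G)}
    (hPi : ∀ c h, Pi (WithLp.toLp 2 (c, h)) = WithLp.toLp 2 (c, (K.orthogonalProjectionOnto h : G))) :
    IsOrthProj Pi := by
  constructor
  · ext ⟨c, h⟩
    simp [hPi, Submodule.starProjection_eq_self_iff]
  · rintro ⟨c, h⟩ ⟨c', h'⟩
    simp [hPi, WithLp.prod_inner_apply, Submodule.inner_starProjection_left_eq_right]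

section Witness

variable {ι V G : Type*} [NormedAddCommGroup V] [InnerProductSpace ℂ V]
  [NormedAddCommGroup G] [InnerProductSpace ℂ G]

lemma inner_sum_smul_eq_of_inner_eq_ite [DecidableEq ι] {s : Finset ι} {k : ι} (hk : k ∈ s)
    {w : V} {z : ι → V} (hw : ∀ α ∈ s, ⟪w, z α⟫_ℂ = if α = k then 1 else 0) (c : ι → ℂ) :
    ⟪w, ∑ α ∈ s, c α • z α⟫_ℂ = c k := by
  simp +contextual [hw, hk]

lemma EuclideanSpace.norm_sq_single_sub_single [Fintype ι] [DecidableEq ι] {i j : ι}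
    (hij : i ≠ j) : ‖EuclideanSpace.single i (1 : ℂ) - EuclideanSpace.single j 1‖ ^ 2 = 2 := by
  rw [sq, sub_eq_add_neg, norm_add_sq_eq_norm_sq_add_norm_sq_of_inner_eq_zero (𝕜 := ℂ), norm_neg,
    PiLp.norm_single, norm_one]
  · norm_num
  · simp [EuclideanSpace.inner_single_left, hij.symm]

lemma norm_sq_toLp_smul_single_sub_single [Fintype ι] [DecidableEq ι] {i j : ι} (hij : i ≠ j)
    (s b : ℝ) (y : G) :
    ‖WithLp.toLp 2 ((s : ℂ) • (EuclideanSpace.single i (1 : ℂ) - EuclideanSpace.single j 1),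
      (b : ℂ) • y)‖ ^ 2 = 2 * s ^ 2 + b ^ 2 * ‖y‖ ^ 2 := by
  rw [WithLp.prod_norm_sq_eq_of_L2, WithLp.toLp_fst, WithLp.toLp_snd, norm_smul, norm_smul,
    mul_pow, mul_pow, EuclideanSpace.norm_sq_single_sub_single hij, Complex.norm_real,
    Complex.norm_real, Real.norm_eq_abs, Real.norm_eq_abs, sq_abs, sq_abs]
  ring

lemma inner_toLp_smul_single_sub_single [Fintype ι] [DecidableEq ι] (s : ℝ) (i j : ι) (y : G)
    (c : EuclideanSpace ℂ ι) (h : G) :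
    ⟪WithLp.toLp 2 ((s : ℂ) • (EuclideanSpace.single i 1 - EuclideanSpace.single j 1), y),
      WithLp.toLp 2 (c, h)⟫_ℂ = s * (c i - c j) + ⟪y, h⟫_ℂ := by
  simp only [WithLp.prod_inner_apply, inner_smul_left, inner_sub_left,
    EuclideanSpace.inner_single_left, Complex.conj_ofReal, map_one, one_mul]

variable [FiniteDimensional ℂ V] [FiniteDimensional ℂ G] {m : ℕ} {A : G →ₗ[ℂ] V} {a : ℝ}
  {z : Fin (m + 1) → V} {M : WithLp 2 (EuclideanSpace ℂ (Fin (m + 1)) × G) →ₗ[ℂ] V}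
  {w : V} {k : Fin (m + 1)}

lemma inner_map_toLp_of_witness
    (hM : ∀ c h, M (WithLp.toLp 2 (c, h)) = (a : ℂ) •
      (c 0 • z 0 - ∑ α ∈ Finset.univ.filter (fun α : Fin (m + 1) => α ≠ 0), c α • z α) + A h)
    (hw0 : ⟪w, z 0⟫_ℂ = 1) (hw : ∀ α, α ≠ 0 → ⟪w, z α⟫_ℂ = if α = k then 1 else 0) (hk : k ≠ 0)
    (c : EuclideanSpace ℂ (Fin (m + 1))) (h : G) :
    ⟪w, M (WithLp.toLp 2 (c, h))⟫_ℂ = a * (c 0 - c k) + ⟪LinearMap.adjoint A w, h⟫_ℂ := by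
  rw [hM, inner_add_right, inner_smul_right, inner_sub_right, inner_smul_right, hw0,
    inner_sum_smul_eq_of_inner_eq_ite (by simpa using hk)
      (fun α hα => hw α (Finset.mem_filter.mp hα).2), LinearMap.adjoint_inner_left, mul_one]

lemma inner_toLp_eq_zero_of_witness
    (hM : ∀ c h, M (WithLp.toLp 2 (c, h)) = (a : ℂ) •
      (c 0 • z 0 - ∑ α ∈ Finset.univ.filter (fun α : Fin (m + 1) => α ≠ 0), c α • z α) + A h)
    (hw0 : ⟪w, z 0⟫_ℂ = 1) (hw : ∀ α, α ≠ 0 → ⟪w, z α⟫_ℂ = if α = k then 1 else 0) (hk : k ≠ 0)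
    {s b : ℝ} (hsb : b * a = s) {x} (hx : x ∈ LinearMap.ker M) :
    ⟪WithLp.toLp 2 ((s : ℂ) • (EuclideanSpace.single 0 1 - EuclideanSpace.single k 1),
      (b : ℂ) • LinearMap.adjoint A w), x⟫_ℂ = 0 := by
  obtain ⟨c, h⟩ := x
  have hwM := inner_map_toLp_of_witness hM hw0 hw hk c h
  rw [LinearMap.mem_ker.mp hx, inner_zero_right] at hwM
  rw [inner_toLp_smul_single_sub_single, inner_smul_left, Complex.conj_ofReal, ← hsb]
  push_cast
  linear_combination (-(b : ℂ)) * hwM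

end Witness

theorem negative_witness_small_phase_overlap_general
    {V H : Type*}
    [NormedAddCommGroup V] [InnerProductSpace ℂ V] [FiniteDimensional ℂ V]
    [NormedAddCommGroup H] [InnerProductSpace ℂ H] [FiniteDimensional ℂ H]
    (A : H →ₗ[ℂ] V) (ε Wp : ℝ) (hε : 0 < ε) (hWp : 0 < Wp)
    (m : ℕ) (k : Fin (m + 1)) (hk : k ≠ 0)
    (z : Fin (m + 1) → V)
    (M : WithLp 2 (EuclideanSpace ℂ (Fin (m + 1)) × H) →ₗ[ℂ] V)
    (hM : ∀ (c : EuclideanSpace ℂ (Fin (m + 1))) (h : H),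
      M ((WithLp.equiv 2 (EuclideanSpace ℂ (Fin (m + 1)) × H)).symm (c, h)) =
        ((Real.sqrt 2 * ε / Real.sqrt Wp : ℝ) : ℂ) •
          (c 0 • z 0 - ∑ α ∈ Finset.univ.filter (fun α : Fin (m + 1) => α ≠ 0), c α • z α)
        + A h)
    (wbar : V) (hwbar0 : ⟪wbar, z 0⟫_ℂ = 1)
    (hwbar : ∀ α : Fin (m + 1), α ≠ 0 → ⟪wbar, z α⟫_ℂ = if α = k then 1 else 0)
    (φm ψbar : WithLp 2 (EuclideanSpace ℂ (Fin (m + 1)) × H))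
    (hφm : φm = (WithLp.equiv 2 (EuclideanSpace ℂ (Fin (m + 1)) × H)).symm
      ((((Real.sqrt 2)⁻¹ : ℝ) : ℂ) •
        (EuclideanSpace.single 0 1 - EuclideanSpace.single k 1), 0))
    (hψbar : ψbar = (WithLp.equiv 2 (EuclideanSpace ℂ (Fin (m + 1)) × H)).symm
      ((((Real.sqrt 2)⁻¹ : ℝ) : ℂ) •
        (EuclideanSpace.single 0 1 - EuclideanSpace.single k 1),
       ((Real.sqrt Wp / (2 * ε) : ℝ) : ℂ) • LinearMap.adjoint A wbar))
    (H0 : Submodule ℂ H)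
    (hH0 : ∀ h ∈ H0, ⟪LinearMap.adjoint A wbar, h⟫_ℂ = 0)
    (Pi Lam U PΘ : WithLp 2 (EuclideanSpace ℂ (Fin (m + 1)) × H) →ₗ[ℂ]
      WithLp 2 (EuclideanSpace ℂ (Fin (m + 1)) × H))
    (hPi : ∀ (c : EuclideanSpace ℂ (Fin (m + 1))) (h : H),
      Pi ((WithLp.equiv 2 (EuclideanSpace ℂ (Fin (m + 1)) × H)).symm (c, h)) =
        (WithLp.equiv 2 (EuclideanSpace ℂ (Fin (m + 1)) × H)).symm
          (c, (H0.orthogonalProjection h : H)))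
    (hLam : IsOrthProj Lam) (hLamrange : LinearMap.range Lam = LinearMap.ker M)
    (hU : U = (2 • Pi - LinearMap.id) ∘ₗ (2 • Lam - LinearMap.id))
    (Θ : ℝ)
    (hPΘ : IsOrthProj PΘ)
    (hPΘrange : LinearMap.range PΘ = Submodule.span ℂ
      {u : WithLp 2 (EuclideanSpace ℂ (Fin (m + 1)) × H) | ∃ θ : ℝ,
        θ ∈ Set.Ioc (-Real.pi) Real.pi ∧ |θ| ≤ Θ ∧
        U u = Complex.exp (θ * Complex.I) • u})
    (Wm Wtot : ℝ) (hWm : ‖LinearMap.adjoint A wbar‖ ^ 2 ≤ Wm)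
    (hWtot : Wtot = Real.sqrt (Wp * Wm)) :
    Pi ψbar = φm ∧
      ‖PΘ φm‖ ^ 2 ≤ (Θ ^ 2 / 4) * (1 + Wtot ^ 2 / (4 * ε ^ 2)) := by
  simp only [WithLp.equiv_symm_apply] at hM hφm hψbar hPi
  have hPiψ : Pi ψbar = φm := by
    have hA : LinearMap.adjoint A wbar ∈ H0ᗮ := (Submodule.mem_orthogonal' _ _).mpr hH0
    rw [hψbar, hPi, map_smul, Submodule.orthogonalProjectionOnto_apply_of_mem_orthogonal hA,
      smul_zero, Submodule.coe_zero, hφm]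
  refine ⟨hPiψ, ?_⟩
  have hscale : Real.sqrt Wp / (2 * ε) * (Real.sqrt 2 * ε / Real.sqrt Wp) = (Real.sqrt 2)⁻¹ := by
    field_simp
    exact Real.sq_sqrt zero_le_two
  have hLamψ : Lam ψbar = 0 := hLam.apply_eq_zero_of_forall_inner_eq_zero fun x hx =>
    hψbar ▸ inner_toLp_eq_zero_of_witness hM hwbar0 hwbar hk hscale (hLamrange ▸ hx)
  have hbound : ‖PΘ φm‖ ≤ |Θ| / 2 * ‖ψbar‖ :=
    hPiψ ▸ hPΘ.norm_apply_le_of_range_le_span_phase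
      (inner_map_map_of_eq_reflection_comp (isOrthProj_of_apply_toLp hPi) hLam hU)
      (hPΘrange.le.trans (Submodule.span_mono fun u ⟨θ, _, hθ, hu⟩ => ⟨θ, hθ, hu⟩))
      (two_smul_apply_eq_sub_of_eq_reflection_comp hU hLamψ)
  have hψnorm : ‖ψbar‖ ^ 2 = 1 + Wp / (4 * ε ^ 2) * ‖LinearMap.adjoint A wbar‖ ^ 2 := by
    rw [hψbar, norm_sq_toLp_smul_single_sub_single hk.symm, inv_pow, div_pow,
      Real.sq_sqrt zero_le_two, Real.sq_sqrt hWp.le]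
    field_simp
    ring
  have hW : Wtot ^ 2 = Wp * Wm := by
    rw [hWtot, Real.sq_sqrt (mul_nonneg hWp.le ((sq_nonneg _).trans hWm))]
  calc ‖PΘ φm‖ ^ 2 ≤ (|Θ| / 2 * ‖ψbar‖) ^ 2 := by gcongr
    _ = Θ ^ 2 / 4 * (1 + Wp / (4 * ε ^ 2) * ‖LinearMap.adjoint A wbar‖ ^ 2) := by
      rw [mul_pow, div_pow, sq_abs, hψnorm]
      norm_num
    _ ≤ Θ ^ 2 / 4 * (1 + Wtot ^ 2 / (4 * ε ^ 2)) := by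
      rw [hW, mul_div_right_comm]
      gcongr

/-- If `w̄` is a negative witness (`⟨w̄, z₀⟩ = 1`, `⟨w̄, z_α⟩ = δ_{kα}`),
`ψ̄ := ((e₀ − e_k)/√2, (√W⁺/(2ε))·A†w̄)`, `H₀ ⊆ H` is a subspace with `A†w̄ ⊥ H₀`,
`Π` acts as the identity on `ℂ^{m+1}` and as the orthogonal projection onto `H₀` on `H`,
`Λ` is the orthogonal projection onto `ker M`, `U = (2Π − I)(2Λ − I)`, and `P_Θ` is the
projection onto the span of eigenvectors of `U` with phase at most `Θ`, then `Π ψ̄ = φ₋` and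
`‖P_Θ φ₋‖² ≤ (Θ²/4)(1 + W²/(4ε²))` where `W = √(W⁺ W⁻)` and `W⁻ ≥ ‖A†w̄‖²`. -/
theorem negative_witness_small_phase_overlap
    {V H : Type*}
    [NormedAddCommGroup V] [InnerProductSpace ℂ V] [FiniteDimensional ℂ V]
    [NormedAddCommGroup H] [InnerProductSpace ℂ H] [FiniteDimensional ℂ H]
    (A : H →ₗ[ℂ] V) (ε Wp : ℝ) (hε : 0 < ε) (hWp : 0 < Wp)
    (m : ℕ) (hm : 1 ≤ m) (k : Fin (m + 1)) (hk : k ≠ 0)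
    (z : Fin (m + 1) → V)
    (M : WithLp 2 (EuclideanSpace ℂ (Fin (m + 1)) × H) →ₗ[ℂ] V)
    (hM : ∀ (c : EuclideanSpace ℂ (Fin (m + 1))) (h : H),
      M ((WithLp.equiv 2 (EuclideanSpace ℂ (Fin (m + 1)) × H)).symm (c, h)) =
        ((Real.sqrt 2 * ε / Real.sqrt Wp : ℝ) : ℂ) •
          (c 0 • z 0 - ∑ α ∈ Finset.univ.filter (fun α : Fin (m + 1) => α ≠ 0), c α • z α)
        + A h)
    (wbar : V) (hwbar0 : ⟪wbar, z 0⟫_ℂ = 1)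
    (hwbar : ∀ α : Fin (m + 1), α ≠ 0 → ⟪wbar, z α⟫_ℂ = if α = k then 1 else 0)
    (φm ψbar : WithLp 2 (EuclideanSpace ℂ (Fin (m + 1)) × H))
    (hφm : φm = (WithLp.equiv 2 (EuclideanSpace ℂ (Fin (m + 1)) × H)).symm
      ((((Real.sqrt 2)⁻¹ : ℝ) : ℂ) •
        (EuclideanSpace.single 0 1 - EuclideanSpace.single k 1), 0))
    (hψbar : ψbar = (WithLp.equiv 2 (EuclideanSpace ℂ (Fin (m + 1)) × H)).symm
      ((((Real.sqrt 2)⁻¹ : ℝ) : ℂ) •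
        (EuclideanSpace.single 0 1 - EuclideanSpace.single k 1),
       ((Real.sqrt Wp / (2 * ε) : ℝ) : ℂ) • LinearMap.adjoint A wbar))
    (H0 : Submodule ℂ H)
    (hH0 : ∀ h ∈ H0, ⟪LinearMap.adjoint A wbar, h⟫_ℂ = 0)
    (Pi Lam U PΘ : WithLp 2 (EuclideanSpace ℂ (Fin (m + 1)) × H) →ₗ[ℂ]
      WithLp 2 (EuclideanSpace ℂ (Fin (m + 1)) × H))
    (hPi : ∀ (c : EuclideanSpace ℂ (Fin (m + 1))) (h : H),
      Pi ((WithLp.equiv 2 (EuclideanSpace ℂ (Fin (m + 1)) × H)).symm (c, h)) =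
        (WithLp.equiv 2 (EuclideanSpace ℂ (Fin (m + 1)) × H)).symm
          (c, (H0.orthogonalProjection h : H)))
    (hLam : IsOrthProj Lam) (hLamrange : LinearMap.range Lam = LinearMap.ker M)
    (hU : U = (2 • Pi - LinearMap.id) ∘ₗ (2 • Lam - LinearMap.id))
    (Θ : ℝ) (hΘ : Θ ∈ Set.Icc (0 : ℝ) Real.pi)
    (hPΘ : IsOrthProj PΘ)
    (hPΘrange : LinearMap.range PΘ = Submodule.span ℂ
      {u : WithLp 2 (EuclideanSpace ℂ (Fin (m + 1)) × H) | ∃ θ : ℝ,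
        θ ∈ Set.Ioc (-Real.pi) Real.pi ∧ |θ| ≤ Θ ∧
        U u = Complex.exp (θ * Complex.I) • u})
    (Wm Wtot : ℝ) (hWm : ‖LinearMap.adjoint A wbar‖ ^ 2 ≤ Wm)
    (hWtot : Wtot = Real.sqrt (Wp * Wm)) :
    Pi ψbar = φm ∧
      ‖PΘ φm‖ ^ 2 ≤ (Θ ^ 2 / 4) * (1 + Wtot ^ 2 / (4 * ε ^ 2)) :=
  negative_witness_small_phase_overlap_general A ε Wp hε hWp m k hk z M hM wbar hwbar0 hwbar φm ψbar
    hφm hψbar H0 hH0 Pi Lam U PΘ hPi hLam hLamrange hU Θ hPΘ hPΘrange Wm Wtot hWm hWtot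

end
end

section
/- Let V be a finite set, W_b, W_r > 0 real numbers, s ≥ 1, and let u₀, u₁, …, u_s be distinct elements of V, with each step i ∈ {1, …, s} assigned a color c_i ∈ {black, red}; write W_{c_i} for W_b if c_i is black and W_r if c_i is red. Let (χ_v)_{v∈V} be the standard orthonormal basis of ℂ^V, and let A : ℂ^s → ℂ^V be the linear map sending the i-th standard basis vector to √W_{c_i}·(χ_{u_{i−1}} − χ_{u_i}). Let w ∈ ℂ^s be the vector whose i-th coordinate is W_{c_i}^{−1/2}. Then A w = χ_{u₀} − χ_{u_s}; and if s ≤ T and at most G of the steps are red, then ‖w‖² ≤ G/W_r + T/W_b. -/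
open Finset

/-!
Expanding `w` in the standard basis, `A w = ∑ᵢ W_{cᵢ}^{-1/2} √W_{cᵢ} (χ_{u_{i-1}} - χ_{uᵢ})`,
in which the weights cancel and the sum telescopes along the path. The squared norm of `w` is
`∑ᵢ 1/W_{cᵢ} = #black/W_b + #red/W_r`, and `#black ≤ s ≤ T`, `#red ≤ G`.
-/

theorem Fin.sum_univ_castSucc_sub_succ {M : Type*} [AddCommGroup M] :
    ∀ {n : ℕ} (f : Fin (n + 1) → M),
      ∑ i : Fin n, (f i.castSucc - f i.succ) = f 0 - f (Fin.last n)
  | 0, _ => by simp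
  | n + 1, f => by
    simp_rw [Fin.sum_univ_castSucc, Fin.succ_castSucc,
      Fin.sum_univ_castSucc_sub_succ (fun i => f i.castSucc)]
    simp

theorem LinearMap.apply_eq_sum_smul_single {ι 𝕜 M : Type*} [Fintype ι] [DecidableEq ι]
    [RCLike 𝕜] [AddCommMonoid M] [Module 𝕜 M] (f : EuclideanSpace 𝕜 ι →ₗ[𝕜] M)
    (x : EuclideanSpace 𝕜 ι) : f x = ∑ i, x i • f (EuclideanSpace.single i 1) := by
  conv_lhs => rw [← (EuclideanSpace.basisFun ι 𝕜).sum_repr x]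
  simp

theorem Finset.sum_ite_bool_le {ι : Type*} [Fintype ι] (c : ι → Bool) {a b T G : ℝ}
    (ha : 0 ≤ a) (hb : 0 ≤ b) (hT : (Fintype.card ι : ℝ) ≤ T)
    (hG : (#{i | c i = false} : ℝ) ≤ G) :
    ∑ i, (if c i then a else b) ≤ G * b + T * a := by
  have hblack : (#{i | c i = true} : ℝ) ≤ T :=
    le_trans (by exact_mod_cast (card_filter_le _ _).trans_eq card_univ) hT
  rw [sum_ite]
  simp only [sum_const, nsmul_eq_mul, Bool.not_eq_true]
  linarith [mul_le_mul_of_nonneg_right hblack ha, mul_le_mul_of_nonneg_right hG hb]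

section WeightedPath

variable {V : Type*} [DecidableEq V] {s : ℕ} (W : Fin s → ℝ)
  {w : EuclideanSpace ℂ (Fin s)} (hw : ∀ i, w i = (((Real.sqrt (W i))⁻¹ : ℝ) : ℂ))
include hw

theorem weighted_path_map_apply_eq_sub (hW : ∀ i, 0 < W i) (u : Fin (s + 1) → V)
    (A : EuclideanSpace ℂ (Fin s) →ₗ[ℂ] EuclideanSpace ℂ V)
    (hA : ∀ i, A (EuclideanSpace.single i 1) = ((Real.sqrt (W i) : ℝ) : ℂ) •
      (EuclideanSpace.single (u i.castSucc) 1 - EuclideanSpace.single (u i.succ) 1)) :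
    A w = EuclideanSpace.single (u 0) 1 - EuclideanSpace.single (u (Fin.last s)) 1 := by
  have hcancel : ∀ i, w i * ((Real.sqrt (W i) : ℝ) : ℂ) = 1 := fun i => by
    rw [hw, ← Complex.ofReal_mul, inv_mul_cancel₀ (Real.sqrt_pos.2 (hW i)).ne',
      Complex.ofReal_one]
  rw [A.apply_eq_sum_smul_single,
    ← Fin.sum_univ_castSucc_sub_succ fun j => EuclideanSpace.single (u j) (1 : ℂ)]
  refine sum_congr rfl fun i _ => ?_
  rw [hA, smul_smul, hcancel, one_smul]

theorem weighted_path_norm_sq (hW : ∀ i, 0 ≤ W i) : ‖w‖ ^ 2 = ∑ i, (W i)⁻¹ := by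
  rw [EuclideanSpace.norm_sq_eq]
  refine sum_congr rfl fun i _ => ?_
  rw [hw, Complex.norm_real, Real.norm_eq_abs, sq_abs, inv_pow, Real.sq_sqrt (hW i)]

end WeightedPath

theorem path_positive_witness_general
    {V : Type*} [DecidableEq V]
    (Wb Wr : ℝ) (hWb : 0 < Wb) (hWr : 0 < Wr)
    (s : ℕ)
    (u : Fin (s + 1) → V)
    (c : Fin s → Bool)
    (A : EuclideanSpace ℂ (Fin s) →ₗ[ℂ] EuclideanSpace ℂ V)
    (hA : ∀ i : Fin s, A (EuclideanSpace.single i 1) =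
      ((Real.sqrt (if c i then Wb else Wr) : ℝ) : ℂ) •
        (EuclideanSpace.single (u i.castSucc) 1 - EuclideanSpace.single (u i.succ) 1))
    (w : EuclideanSpace ℂ (Fin s))
    (hw : ∀ i : Fin s, w i = (((Real.sqrt (if c i then Wb else Wr))⁻¹ : ℝ) : ℂ))
    (T G : ℝ) (hT : (s : ℝ) ≤ T)
    (hG : ((Finset.univ.filter (fun i : Fin s => c i = false)).card : ℝ) ≤ G) :
    A w = EuclideanSpace.single (u 0) 1 - EuclideanSpace.single (u (Fin.last s)) 1 ∧
      ‖w‖ ^ 2 ≤ G / Wr + T / Wb := by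
  have hW : ∀ i, 0 < (if c i then Wb else Wr) := fun i => by split <;> assumption
  refine ⟨weighted_path_map_apply_eq_sub _ hw hW u A hA, ?_⟩
  rw [weighted_path_norm_sq _ hw fun i => (hW i).le, div_eq_mul_inv, div_eq_mul_inv]
  simp only [apply_ite Inv.inv]
  exact sum_ite_bool_le c (inv_nonneg.2 hWb.le) (inv_nonneg.2 hWr.le) (by simpa using hT) hG

/-- Positive witness of the span program built from a decision tree.  For a path
`u₀, u₁, …, u_s` of distinct vertices with colored steps (`true` = black, `false` = red) of
weights `W_b`, `W_r`, the map `A` sends the `i`-th basis vector to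
`√W_{cᵢ}(χ_{u_{i−1}} − χ_{uᵢ})`; the vector `w` with coordinates `W_{cᵢ}^{−1/2}` satisfies
`A w = χ_{u₀} − χ_{u_s}`, and `‖w‖² ≤ G/W_r + T/W_b` provided `s ≤ T` and at most `G` steps
are red. -/
theorem path_positive_witness
    {V : Type*} [Fintype V] [DecidableEq V]
    (Wb Wr : ℝ) (hWb : 0 < Wb) (hWr : 0 < Wr)
    (s : ℕ) (hs : 1 ≤ s)
    (u : Fin (s + 1) → V) (hu : Function.Injective u)
    (c : Fin s → Bool)
    (A : EuclideanSpace ℂ (Fin s) →ₗ[ℂ] EuclideanSpace ℂ V)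
    (hA : ∀ i : Fin s, A (EuclideanSpace.single i 1) =
      ((Real.sqrt (if c i then Wb else Wr) : ℝ) : ℂ) •
        (EuclideanSpace.single (u i.castSucc) 1 - EuclideanSpace.single (u i.succ) 1))
    (w : EuclideanSpace ℂ (Fin s))
    (hw : ∀ i : Fin s, w i = (((Real.sqrt (if c i then Wb else Wr))⁻¹ : ℝ) : ℂ))
    (T G : ℝ) (hT : (s : ℝ) ≤ T)
    (hG : ((Finset.univ.filter (fun i : Fin s => c i = false)).card : ℝ) ≤ G) :
    A w = EuclideanSpace.single (u 0) 1 - EuclideanSpace.single (u (Fin.last s)) 1 ∧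
      ‖w‖ ^ 2 ≤ G / Wr + T / Wb :=
  path_positive_witness_general Wb Wr hWb hWr s u c A hA w hw T G hT hG
end

section
/- Let 𝒯 be a finite rooted binary tree with vertex set V, root z₀, edges oriented from parent to child, in which every internal vertex has exactly two children, with one connecting edge colored black and the other red (a G-coloring). Let W_b, W_r > 0, write W_{c(e)} for the weight of edge e according to its color, let (χ_v)_{v∈V} be the standard orthonormal basis of ℂ^V, and let A : ℂ^E → ℂ^V be the linear map sending the basis vector of an edge e = (u, v) to √W_{c(e)}·(χ_u − χ_v). Fix a leaf z, let P be the set of vertices on the root-to-z path, and set w̄ := Σ_{v∈P} χ_v. Then: (a) for every edge e = (u, v), the inner product of A e with w̄ equals 0 if both or neither of u, v lie in P, and equals √W_{c(e)} if u ∈ P and v ∉ P; (b) the inner product of χ_{z₀} − χ_{z'} with w̄ equals 1 for every leaf z' ≠ z, and equals 0 for z' = z; (c) if the root-to-z path has at most T edges of which at most G are red, then ‖A†w̄‖² ≤ W_b·G + W_r·T. -/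
/-!
On the path to the leaf `z`, `w̄` is the indicator of `P`, so `⟨A e, w̄⟩ = √W_{c(e)}` on the
edges leaving `P` and `0` on every other edge; hence `‖A†w̄‖²` is the total weight of the leaving
edges. Sending a leaving edge to its sibling, the unique child of the same parent that lies on
the path, is injective and flips the colour, so this weight is at most `W_b` times the number of
red path edges plus `W_r` times the number of path edges, and the latter is at most `depth z`.
-/

open scoped InnerProductSpace

open Finset

section RootedTree

variable {V : Type*} {root : V} {parent : V → V}

theorem iterate_eq_root_of_depth_le (hproot : parent root = root) {depth : V → ℕ}
    (hdparent : ∀ v, v ≠ root → depth (parent v) + 1 = depth v) :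
    ∀ (k : ℕ) (v : V), depth v ≤ k → parent^[k] v = root
  | 0, v, hv => by
    by_contra hne
    have := hdparent v hne
    omega
  | k + 1, v, hv => by
    by_cases hroot : v = root
    · rw [hroot]; exact Function.iterate_fixed hproot _
    · have := hdparent v hroot
      exact iterate_eq_root_of_depth_le hproot hdparent k (parent v) (by omega)

theorem exists_child_iterate (hproot : parent root = root) (z : V) :
    ∀ k : ℕ, parent^[k] z ≠ z →
      ∃ j, parent^[j] z ≠ root ∧ parent (parent^[j] z) = parent^[k] z
  | 0, hk => absurd rfl hk
  | k + 1, hk => by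
    by_cases hroot : parent^[k] z = root
    · have hstay : parent^[k + 1] z = parent^[k] z := by
        rw [Function.iterate_succ_apply', hroot, hproot]
      rw [hstay] at hk ⊢
      exact exists_child_iterate hproot z k hk
    · exact ⟨k, hroot, (Function.iterate_succ_apply' parent k z).symm⟩

variable {z : V} {P : Finset V} (hP : ∀ v, v ∈ P ↔ ∃ k : ℕ, parent^[k] z = v)
include hP

theorem parent_mem_of_mem_path {v : V} (hv : v ∈ P) : parent v ∈ P := by
  obtain ⟨k, rfl⟩ := (hP v).1 hv
  exact (hP _).2 ⟨k + 1, Function.iterate_succ_apply' parent k z⟩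

theorem exists_child_mem_path (hproot : parent root = root) {v : V} (hv : v ∈ P)
    (hvz : v ≠ z) :
    ∃ c ∈ P, c ≠ root ∧ parent c = v := by
  obtain ⟨k, rfl⟩ := (hP v).1 hv
  obtain ⟨j, hj, hpar⟩ := exists_child_iterate hproot z k hvz
  exact ⟨_, (hP _).2 ⟨j, rfl⟩, hj, hpar⟩

theorem notMem_path_of_leaf (hproot : parent root = root) {v : V}
    (hleaf : ¬∃ u, u ≠ root ∧ parent u = v) (hvz : v ≠ z) : v ∉ P := fun hv ↦ by
  obtain ⟨c, -, hc, hpar⟩ := exists_child_mem_path hP hproot hv hvz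
  exact hleaf ⟨c, hc, hpar⟩

theorem card_filter_ne_root_le (hproot : parent root = root) {depth : V → ℕ}
    (hdparent : ∀ v, v ≠ root → depth (parent v) + 1 = depth v) [DecidableEq V] :
    #{v ∈ P | v ≠ root} ≤ depth z := by
  have hsub : {v ∈ P | v ≠ root} ⊆ (range (depth z)).image (parent^[·] z) := by
    intro v hv
    obtain ⟨hvP, hvroot⟩ := mem_filter.1 hv
    obtain ⟨k, rfl⟩ := (hP _).1 hvP
    refine mem_image.2 ⟨k, mem_range.2 ?_, rfl⟩
    by_contra! hk
    exact hvroot (iterate_eq_root_of_depth_le hproot hdparent k z hk)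
  calc #{v ∈ P | v ≠ root} ≤ #((range (depth z)).image (parent^[·] z)) := card_le_card hsub
    _ ≤ depth z := card_image_le.trans (card_range _).le

end RootedTree

section Coloring

variable {V : Type*} {root : V} {parent : V → V} {color : V → Bool}

theorem eq_of_parent_eq_of_color_eq
    (hbin : ∀ v, (∃ u, u ≠ root ∧ parent u = v) →
      ∃ b r, b ≠ r ∧ b ≠ root ∧ r ≠ root ∧ parent b = v ∧ parent r = v ∧
        color b = true ∧ color r = false ∧
        ∀ u, u ≠ root → parent u = v → (u = b ∨ u = r))
    {u u' : V} (hu : u ≠ root) (hu' : u' ≠ root) (hpar : parent u = parent u')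
    (hcol : color u = color u') : u = u' := by
  obtain ⟨b, r, -, -, -, -, -, hb, hr, hchildren⟩ := hbin (parent u) ⟨u, hu, rfl⟩
  rcases hchildren u hu rfl with rfl | rfl <;>
    rcases hchildren u' hu' hpar.symm with rfl | rfl <;> simp_all

theorem sum_weight_leaving_path_le [Fintype V] [DecidableEq V] (hproot : parent root = root)
    (hsib : ∀ u u', u ≠ root → u' ≠ root → parent u = parent u' → color u = color u' → u = u')
    {z : V} (hz : ¬∃ u, u ≠ root ∧ parent u = z)
    {P : Finset V} (hP : ∀ v, v ∈ P ↔ ∃ k : ℕ, parent^[k] z = v)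
    (W : Bool → ℝ) (hW : ∀ b, 0 ≤ W b) :
    ∑ e : {v : V // v ≠ root} with parent e.1 ∈ P ∧ e.1 ∉ P, W (color e.1) ≤
      ∑ v ∈ P with v ≠ root, W (!color v) := by
  set S : Finset {v : V // v ≠ root} := {e | parent e.1 ∈ P ∧ e.1 ∉ P}
  have hsibling : ∀ e ∈ S, ∃ c ∈ P, c ≠ root ∧ parent c = parent e.1 := fun e he ↦
    exists_child_mem_path hP hproot (mem_filter.1 he).2.1 fun h ↦ hz ⟨e.1, e.2, h⟩
  have : Nonempty V := ⟨root⟩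
  choose! f hfP hfroot hfpar using hsibling
  have hfcolor : ∀ e ∈ S, color (f e) = !color e.1 := by
    intro e he
    by_contra hcol
    refine (mem_filter.1 he).2.2 ?_
    rw [← hsib _ _ (hfroot e he) e.2 (hfpar e he) (by simpa using hcol)]
    exact hfP e he
  have hinj : Set.InjOn f ↑S := by
    intro e he e' he' hee'
    refine Subtype.ext (hsib _ _ e.2 e'.2 ?_ ?_)
    · rw [← hfpar e he, ← hfpar e' he', hee']
    · have hcol := hfcolor e he
      rw [hee', hfcolor e' he'] at hcol
      simpa using hcol.symm
  calc ∑ e ∈ S, W (color e.1) = ∑ e ∈ S, W (!color (f e)) :=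
        sum_congr rfl fun e he ↦ by rw [hfcolor e he, Bool.not_not]
    _ = ∑ v ∈ S.image f, W (!color v) :=
        (sum_image (f := fun v ↦ W (!color v)) hinj).symm
    _ ≤ ∑ v ∈ P with v ≠ root, W (!color v) := by
        refine sum_le_sum_of_subset_of_nonneg ?_ fun _ _ _ ↦ hW _
        intro v hv
        obtain ⟨e, he, rfl⟩ := mem_image.1 hv
        exact mem_filter.2 ⟨hfP e he, hfroot e he⟩

end Coloring

theorem sum_ite_not_le {α : Type*} (s : Finset α) (c : α → Bool) {Wb Wr : ℝ}
    (hWr : 0 ≤ Wr) :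
    ∑ v ∈ s, (if !c v then Wb else Wr) ≤ Wb * #{v ∈ s | c v = false} + Wr * #s := by
  calc ∑ v ∈ s, (if !c v then Wb else Wr)
      ≤ ∑ v ∈ s, ((if c v = false then Wb else 0) + Wr) :=
        sum_le_sum fun v _ ↦ by cases c v <;> simp [hWr]
    _ = Wb * #{v ∈ s | c v = false} + Wr * #s := by
        rw [sum_add_distrib, ← sum_filter, sum_const, sum_const, nsmul_eq_mul, nsmul_eq_mul,
          mul_comm, mul_comm (#s : ℝ)]

section EuclideanSpace

variable {𝕜 ι : Type*} [RCLike 𝕜] [Fintype ι] [DecidableEq ι]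

theorem EuclideanSpace.inner_single_sum_single (i : ι) (s : Finset ι) :
    ⟪EuclideanSpace.single i (1 : 𝕜), ∑ j ∈ s, EuclideanSpace.single j 1⟫_𝕜 =
      if i ∈ s then 1 else 0 := by
  simp [EuclideanSpace.inner_single_left, Finset.sum_apply]

theorem EuclideanSpace.inner_sub_single_sum_single (i j : ι) (s : Finset ι) :
    ⟪EuclideanSpace.single i (1 : 𝕜) - EuclideanSpace.single j 1,
        ∑ k ∈ s, EuclideanSpace.single k 1⟫_𝕜 =
      (if i ∈ s then 1 else 0) - (if j ∈ s then 1 else 0) := by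
  rw [inner_sub_left, inner_single_sum_single, inner_single_sum_single]

theorem EuclideanSpace.norm_sq_adjoint_eq_sum {F : Type*} [NormedAddCommGroup F]
    [InnerProductSpace 𝕜 F] [FiniteDimensional 𝕜 F] (A : EuclideanSpace 𝕜 ι →ₗ[𝕜] F) (w : F) :
    ‖LinearMap.adjoint A w‖ ^ 2 = ∑ i, ‖⟪A (EuclideanSpace.single i 1), w⟫_𝕜‖ ^ 2 := by
  simp_rw [← (EuclideanSpace.basisFun ι 𝕜).sum_sq_norm_inner_right,
    EuclideanSpace.basisFun_apply, LinearMap.adjoint_inner_right]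

end EuclideanSpace

theorem norm_sq_sqrt_mul_indicator_sub {W : ℝ} (hW : 0 ≤ W) {p q : Prop} [Decidable p]
    [Decidable q] (hqp : q → p) :
    ‖(√W : ℂ) * ((if p then 1 else 0) - (if q then 1 else 0))‖ ^ 2 =
      if p ∧ ¬q then W else 0 := by
  by_cases hq : q
  · simp [hq, hqp hq]
  · by_cases hp : p
    · simp [hp, hq, Complex.norm_real, Real.sq_sqrt hW]
    · simp [hp, hq]

theorem tree_negative_witness_general
    {V : Type*} [Fintype V] [DecidableEq V]
    (root : V) (parent : V → V) (color : V → Bool) (depth : V → ℕ)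
    (hproot : parent root = root)
    (hdparent : ∀ v, v ≠ root → depth (parent v) + 1 = depth v)
    (hbin : ∀ v, (∃ u, u ≠ root ∧ parent u = v) →
      ∃ b r, b ≠ r ∧ b ≠ root ∧ r ≠ root ∧ parent b = v ∧ parent r = v ∧
        color b = true ∧ color r = false ∧
        ∀ u, u ≠ root → parent u = v → (u = b ∨ u = r))
    (Wb Wr : ℝ) (hWb : 0 < Wb) (hWr : 0 < Wr)
    (A : EuclideanSpace ℂ {v : V // v ≠ root} →ₗ[ℂ] EuclideanSpace ℂ V)
    (hA : ∀ e : {v : V // v ≠ root},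
      A (EuclideanSpace.single e 1) =
        ((Real.sqrt (if color e.1 then Wb else Wr) : ℝ) : ℂ) •
          (EuclideanSpace.single (parent e.1) 1 - EuclideanSpace.single e.1 1))
    (z : V) (hz : ¬∃ u, u ≠ root ∧ parent u = z)
    (P : Finset V) (hP : ∀ v, v ∈ P ↔ ∃ k : ℕ, parent^[k] z = v)
    (wbar : EuclideanSpace ℂ V)
    (hwbar : wbar = ∑ v ∈ P, EuclideanSpace.single v 1) :
    (∀ e : {v : V // v ≠ root},
      ((parent e.1 ∈ P ↔ e.1 ∈ P) →
        ⟪A (EuclideanSpace.single e 1), wbar⟫_ℂ = 0) ∧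
      (parent e.1 ∈ P → e.1 ∉ P →
        ⟪A (EuclideanSpace.single e 1), wbar⟫_ℂ =
          ((Real.sqrt (if color e.1 then Wb else Wr) : ℝ) : ℂ))) ∧
    (∀ z' : V, (¬∃ u, u ≠ root ∧ parent u = z') →
      (z' ≠ z →
        ⟪EuclideanSpace.single root 1 - EuclideanSpace.single z' 1, wbar⟫_ℂ = 1) ∧
      (z' = z →
        ⟪EuclideanSpace.single root 1 - EuclideanSpace.single z' 1, wbar⟫_ℂ = 0)) ∧
    (∀ T G : ℝ, (depth z : ℝ) ≤ T →
      ((P.filter (fun v => v ≠ root ∧ color v = false)).card : ℝ) ≤ G →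
      ‖LinearMap.adjoint A wbar‖ ^ 2 ≤ Wb * G + Wr * T) := by
  subst hwbar
  have hrootP : root ∈ P :=
    (hP root).2 ⟨depth z, iterate_eq_root_of_depth_le hproot hdparent _ z le_rfl⟩
  have hinner (e : {v : V // v ≠ root}) :
      ⟪A (EuclideanSpace.single e 1), ∑ v ∈ P, EuclideanSpace.single v 1⟫_ℂ =
        √(if color e.1 then Wb else Wr) *
          ((if parent e.1 ∈ P then 1 else 0) - if e.1 ∈ P then 1 else 0) := by
    rw [hA, inner_smul_left, EuclideanSpace.inner_sub_single_sum_single, Complex.conj_ofReal]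
  refine ⟨fun e ↦ ⟨fun hiff ↦ ?_, fun hp hnp ↦ ?_⟩, fun z' hz' ↦ ⟨fun hne ↦ ?_, ?_⟩,
    fun T G hT hG ↦ ?_⟩
  · by_cases he : e.1 ∈ P <;> simp [hinner, he, hiff]
  · simp [hinner, hp, hnp]
  · rw [EuclideanSpace.inner_sub_single_sum_single]
    simp [hrootP, notMem_path_of_leaf hP hproot hz' hne]
  · rintro rfl
    rw [EuclideanSpace.inner_sub_single_sum_single]
    simp [hrootP, (hP z').2 ⟨0, rfl⟩]
  set W : Bool → ℝ := fun b ↦ if b then Wb else Wr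
  calc ‖LinearMap.adjoint A (∑ v ∈ P, EuclideanSpace.single v 1)‖ ^ 2
      = ∑ e, ‖⟪A (EuclideanSpace.single e 1), ∑ v ∈ P, EuclideanSpace.single v 1⟫_ℂ‖ ^ 2 :=
        EuclideanSpace.norm_sq_adjoint_eq_sum A _
    _ = ∑ e : {v : V // v ≠ root} with parent e.1 ∈ P ∧ e.1 ∉ P, W (color e.1) := by
        rw [sum_filter]
        refine sum_congr rfl fun e _ ↦ ?_
        rw [hinner, norm_sq_sqrt_mul_indicator_sub (by positivity) (parent_mem_of_mem_path hP)]
    _ ≤ ∑ v ∈ P with v ≠ root, W (!color v) :=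
        sum_weight_leaving_path_le hproot (fun _ _ ↦ eq_of_parent_eq_of_color_eq hbin) hz hP W
          fun b ↦ by cases b <;> positivity
    _ ≤ Wb * #{v ∈ P | v ≠ root ∧ color v = false} + Wr * #{v ∈ P | v ≠ root} := by
        rw [← filter_filter]
        exact sum_ite_not_le _ _ hWr.le
    _ ≤ Wb * G + Wr * T := by
        gcongr
        exact le_trans (by exact_mod_cast card_filter_ne_root_le hP hproot hdparent) hT

/-- Negative witness of the span program built from a binary decision tree with a G-coloring.
The tree on vertex set `V` is encoded by its root, a parent function (with `parent root = root`
by convention), the color of each non-root vertex's parent edge (`true` = black, `false` = red)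
and a depth function certifying the tree structure.  Every internal vertex has exactly two
children, one black and one red.  The map `A` sends the basis vector of an edge `(parent v, v)`
(indexed by the non-root vertex `v`) to `√W_{c(v)}(χ_{parent v} − χ_v)`.  For a leaf `z` with
root-to-`z` path `P` and `w̄ := Σ_{v ∈ P} χ_v`:
(a) `⟨A e, w̄⟩ = 0` for an edge with both or neither endpoint on `P`, and `= √W_{c(e)}` if the
edge leaves the path; (b) `⟨χ_{z₀} − χ_{z'}, w̄⟩ = 1` for leaves `z' ≠ z` and `= 0` for `z`;
(c) `‖A†w̄‖² ≤ W_b·G + W_r·T` if the path has at most `T` edges, at most `G` of them red. -/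
theorem tree_negative_witness
    {V : Type*} [Fintype V] [DecidableEq V]
    (root : V) (parent : V → V) (color : V → Bool) (depth : V → ℕ)
    (hproot : parent root = root)
    (hdroot : depth root = 0)
    (hdparent : ∀ v, v ≠ root → depth (parent v) + 1 = depth v)
    (hbin : ∀ v, (∃ u, u ≠ root ∧ parent u = v) →
      ∃ b r, b ≠ r ∧ b ≠ root ∧ r ≠ root ∧ parent b = v ∧ parent r = v ∧
        color b = true ∧ color r = false ∧
        ∀ u, u ≠ root → parent u = v → (u = b ∨ u = r))
    (Wb Wr : ℝ) (hWb : 0 < Wb) (hWr : 0 < Wr)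
    (A : EuclideanSpace ℂ {v : V // v ≠ root} →ₗ[ℂ] EuclideanSpace ℂ V)
    (hA : ∀ e : {v : V // v ≠ root},
      A (EuclideanSpace.single e 1) =
        ((Real.sqrt (if color e.1 then Wb else Wr) : ℝ) : ℂ) •
          (EuclideanSpace.single (parent e.1) 1 - EuclideanSpace.single e.1 1))
    (z : V) (hz : ¬∃ u, u ≠ root ∧ parent u = z)
    (P : Finset V) (hP : ∀ v, v ∈ P ↔ ∃ k : ℕ, parent^[k] z = v)
    (wbar : EuclideanSpace ℂ V)
    (hwbar : wbar = ∑ v ∈ P, EuclideanSpace.single v 1) :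
    (∀ e : {v : V // v ≠ root},
      ((parent e.1 ∈ P ↔ e.1 ∈ P) →
        ⟪A (EuclideanSpace.single e 1), wbar⟫_ℂ = 0) ∧
      (parent e.1 ∈ P → e.1 ∉ P →
        ⟪A (EuclideanSpace.single e 1), wbar⟫_ℂ =
          ((Real.sqrt (if color e.1 then Wb else Wr) : ℝ) : ℂ))) ∧
    (∀ z' : V, (¬∃ u, u ≠ root ∧ parent u = z') →
      (z' ≠ z →
        ⟪EuclideanSpace.single root 1 - EuclideanSpace.single z' 1, wbar⟫_ℂ = 1) ∧
      (z' = z →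
        ⟪EuclideanSpace.single root 1 - EuclideanSpace.single z' 1, wbar⟫_ℂ = 0)) ∧
    (∀ T G : ℝ, (depth z : ℝ) ≤ T →
      ((P.filter (fun v => v ≠ root ∧ color v = false)).card : ℝ) ≤ G →
      ‖LinearMap.adjoint A wbar‖ ^ 2 ≤ Wb * G + Wr * T) :=
  tree_negative_witness_general root parent color depth hproot hdparent hbin Wb Wr hWb hWr A hA z hz
    P hP wbar hwbar
end

section
/- Each of the n + 2 Type I vectors and each of the n + 2 Type II vectors lies in the kernel of M̃. -/
noncomputable section

/-! The decision graph `𝒯̃` for `G = 1`.  Its vertex set has `2n + 4` elements: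
`z₀, z₁, …, z_{n+1}` (encoded `Sum.inl j`), `v₀, …, v_{n−1}` (encoded `Sum.inr (Sum.inl i)`),
`v̂₀` (encoded `Sum.inr (Sum.inr false)`) and `ẑ` (encoded `Sum.inr (Sum.inr true)`). -/

/-- Vertices of the decision graph `𝒯̃`. -/
abbrev GraphV (n : ℕ) := Fin (n + 2) ⊕ Fin n ⊕ Bool

/-- Column indices of `M̃`: root/leaf columns, black edges, red edges, pseudo-edges
(`4n + 8` columns). -/
abbrev ColIdx (n : ℕ) := Fin (n + 2) ⊕ Fin (n + 2) ⊕ Fin (n + 2) ⊕ Fin (n + 2)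

/-- Source of the red edge `r_i`: `r₀ = (z₀, v̂₀)`, `r_i = (v_{i−1}, z_i)` for `1 ≤ i ≤ n`,
`r_{n+1} = (ẑ, z_{n+1})`. -/
def redSrc (n : ℕ) (i : Fin (n + 2)) : GraphV n :=
  if h0 : (i : ℕ) = 0 then Sum.inl 0
  else if h1 : (i : ℕ) = n + 1 then Sum.inr (Sum.inr true)
  else Sum.inr (Sum.inl ⟨(i : ℕ) - 1, by have := i.isLt; omega⟩)

/-- Target of the red edge `r_i`. -/
def redTgt (n : ℕ) (i : Fin (n + 2)) : GraphV n :=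
  if (i : ℕ) = 0 then Sum.inr (Sum.inr false) else Sum.inl i

/-- Source of the black edge with index `i`:  `b̂₀ = (v̂₀, v₀)`, `b_i = (v_{i−1}, v_i)` for
`1 ≤ i ≤ n − 1`, `b̂_n = (v_{n−1}, ẑ)`, `b̂_{n+1} = (ẑ, v̂₀)`. -/
def blackSrc (n : ℕ) (i : Fin (n + 2)) : GraphV n :=
  if h0 : (i : ℕ) = 0 then Sum.inr (Sum.inr false)
  else if h1 : (i : ℕ) = n + 1 then Sum.inr (Sum.inr true)
  else Sum.inr (Sum.inl ⟨(i : ℕ) - 1, by have := i.isLt; omega⟩)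

/-- Target of the black edge with index `i`. -/
def blackTgt (n : ℕ) (i : Fin (n + 2)) : GraphV n :=
  if h0 : (i : ℕ) = n then Sum.inr (Sum.inr true)
  else if h1 : (i : ℕ) = n + 1 then Sum.inr (Sum.inr false)
  else Sum.inr (Sum.inl ⟨(i : ℕ), by have := i.isLt; omega⟩)

/-- The columns of `M̃`: `α|z₀⟩` for `e_{z₀}`, `−α|z_j⟩` for `e_{z_j}`,
`β(|u⟩ − |v⟩)` for black edges, `γ(|u⟩ − |v⟩)` for red edges and `γ(|u⟩ + |v⟩)` for
pseudo-edges. -/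
def col (n : ℕ) (α β γ : ℝ) : ColIdx n → EuclideanSpace ℂ (GraphV n)
  | Sum.inl j => (if j = 0 then (α : ℂ) else (-α : ℂ)) •
      EuclideanSpace.single (Sum.inl j) 1
  | Sum.inr (Sum.inl i) => (β : ℂ) •
      (EuclideanSpace.single (blackSrc n i) 1 - EuclideanSpace.single (blackTgt n i) 1)
  | Sum.inr (Sum.inr (Sum.inl i)) => (γ : ℂ) •
      (EuclideanSpace.single (redSrc n i) 1 - EuclideanSpace.single (redTgt n i) 1)
  | Sum.inr (Sum.inr (Sum.inr i)) => (γ : ℂ) •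
      (EuclideanSpace.single (redSrc n i) 1 + EuclideanSpace.single (redTgt n i) 1)

/-- The matrix `M̃`, as a linear map sending the standard basis vector of each column index
to the corresponding column. -/
def Mt (n : ℕ) (α β γ : ℝ) :
    EuclideanSpace ℂ (ColIdx n) →ₗ[ℂ] EuclideanSpace ℂ (GraphV n) :=
  (PiLp.basisFun 2 ℂ (ColIdx n)).constr ℂ (col n α β γ)

/-- `|r_i^+⟩ = (|r̄_i⟩ + |r_i⟩)/√2`. -/
def rplus (n : ℕ) (i : Fin (n + 2)) : EuclideanSpace ℂ (ColIdx n) :=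
  (((Real.sqrt 2)⁻¹ : ℝ) : ℂ) •
    (EuclideanSpace.single (Sum.inr (Sum.inr (Sum.inr i))) 1 +
      EuclideanSpace.single (Sum.inr (Sum.inr (Sum.inl i))) 1)

/-- `|r_i^−⟩ = (|r̄_i⟩ − |r_i⟩)/√2`. -/
def rminus (n : ℕ) (i : Fin (n + 2)) : EuclideanSpace ℂ (ColIdx n) :=
  (((Real.sqrt 2)⁻¹ : ℝ) : ℂ) •
    (EuclideanSpace.single (Sum.inr (Sum.inr (Sum.inr i))) 1 -
      EuclideanSpace.single (Sum.inr (Sum.inr (Sum.inl i))) 1)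

/-- Type I vectors: `−(√2/α)|e_{z₀}⟩ + (1/γ)|r₀⁺⟩` and, for `1 ≤ i ≤ n + 1`,
`(√2/α)|e_{z_i}⟩ + (1/γ)|r_i⁻⟩`. -/
def typeI (n : ℕ) (α γ : ℝ) (i : Fin (n + 2)) : EuclideanSpace ℂ (ColIdx n) :=
  if i = 0 then
    ((-(Real.sqrt 2 / α) : ℝ) : ℂ) • EuclideanSpace.single (Sum.inl 0) 1 +
      ((γ⁻¹ : ℝ) : ℂ) • rplus n 0
  else
    ((Real.sqrt 2 / α : ℝ) : ℂ) • EuclideanSpace.single (Sum.inl i) 1 +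
      ((γ⁻¹ : ℝ) : ℂ) • rminus n i

/-- Type II vectors: `(√2/β)|b̂₀⟩ − (1/γ)|r₀⁻⟩ + (1/γ)|r₁⁺⟩`; for `1 ≤ i ≤ n`,
`(√2/β)|bᵢ⟩ − (1/γ)|rᵢ⁺⟩ + (1/γ)|r_{i+1}⁺⟩`; and
`(√2/β)|b̂_{n+1}⟩ − (1/γ)|r_{n+1}⁺⟩ + (1/γ)|r₀⁻⟩`. -/
def typeII (n : ℕ) (β γ : ℝ) (i : Fin (n + 2)) : EuclideanSpace ℂ (ColIdx n) :=
  if h0 : (i : ℕ) = 0 then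
    ((Real.sqrt 2 / β : ℝ) : ℂ) • EuclideanSpace.single (Sum.inr (Sum.inl 0)) 1 -
      ((γ⁻¹ : ℝ) : ℂ) • rminus n 0 + ((γ⁻¹ : ℝ) : ℂ) • rplus n 1
  else if h1 : (i : ℕ) = n + 1 then
    ((Real.sqrt 2 / β : ℝ) : ℂ) • EuclideanSpace.single (Sum.inr (Sum.inl i)) 1 -
      ((γ⁻¹ : ℝ) : ℂ) • rplus n i + ((γ⁻¹ : ℝ) : ℂ) • rminus n 0
  else
    ((Real.sqrt 2 / β : ℝ) : ℂ) • EuclideanSpace.single (Sum.inr (Sum.inl i)) 1 -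
      ((γ⁻¹ : ℝ) : ℂ) • rplus n i +
      ((γ⁻¹ : ℝ) : ℂ) • rplus n ⟨(i : ℕ) + 1, by have := i.isLt; omega⟩

/-! Under `M̃`, `|r_i⁺⟩` and `|r_i⁻⟩` go to `√2 γ` times the source and the target of `r_i`.
So a Type I vector goes to a multiple of `|z_i⟩` in which the leaf column cancels the red edge
at `z_i`, and a Type II vector for the black edge `(u, v)` goes to
`√2 (|u⟩ - |v⟩) - √2 |u⟩ + √2 |v⟩ = 0`: its two red-edge vectors are chosen so that their images
sit at `u` and at `v`. -/

section

variable {n : ℕ} {α β γ : ℝ}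

lemma Mt_single (c : ColIdx n) : Mt n α β γ (EuclideanSpace.single c 1) = col n α β γ c := by
  simp [Mt]

lemma inv_sqrt_two_mul_two : (((√2)⁻¹ : ℝ) : ℂ) * 2 = √2 := by
  exact_mod_cast (by rw [inv_mul_eq_div, Real.div_sqrt] : (√2)⁻¹ * 2 = √2)

lemma Mt_rplus (i : Fin (n + 2)) :
    Mt n α β γ (rplus n i) = ((√2 * γ : ℝ) : ℂ) • EuclideanSpace.single (redSrc n i) 1 := by
  rw [rplus, map_smul, map_add, Mt_single, Mt_single]
  simp only [col]
  calc _ = ((((√2)⁻¹ : ℝ) : ℂ) * 2 * γ) • EuclideanSpace.single (redSrc n i) (1 : ℂ) := by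
        module
    _ = _ := by rw [inv_sqrt_two_mul_two]; push_cast; rfl

lemma Mt_rminus (i : Fin (n + 2)) :
    Mt n α β γ (rminus n i) = ((√2 * γ : ℝ) : ℂ) • EuclideanSpace.single (redTgt n i) 1 := by
  rw [rminus, map_smul, map_sub, Mt_single, Mt_single]
  simp only [col]
  calc _ = ((((√2)⁻¹ : ℝ) : ℂ) * 2 * γ) • EuclideanSpace.single (redTgt n i) (1 : ℂ) := by
        module
    _ = _ := by rw [inv_sqrt_two_mul_two]; push_cast; rfl

lemma redSrc_zero : redSrc n 0 = Sum.inl 0 := by simp [redSrc]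

lemma redTgt_of_ne_zero {i : Fin (n + 2)} (hi : i ≠ 0) : redTgt n i = Sum.inl i := by
  simp [redTgt, Fin.val_ne_zero_iff.mpr hi]

lemma blackSrc_zero : blackSrc n 0 = redTgt n 0 := by simp [blackSrc, redTgt]

lemma blackSrc_eq_redSrc {i : Fin (n + 2)} (hi : i ≠ 0) : blackSrc n i = redSrc n i := by
  simp [blackSrc, redSrc, Fin.val_ne_zero_iff.mpr hi]

lemma blackTgt_eq_redTgt_zero {i : Fin (n + 2)} (hi : (i : ℕ) = n + 1) :
    blackTgt n i = redTgt n 0 := by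
  simp [blackTgt, redTgt, hi]

lemma blackTgt_eq_redSrc {i j : Fin (n + 2)} (hj : (j : ℕ) = i + 1) :
    blackTgt n i = redSrc n j := by
  have := j.isLt
  unfold blackTgt redSrc
  split_ifs <;> first | omega | simp_all

lemma typeI_mem_ker (hα : α ≠ 0) (hγ : γ ≠ 0) (i : Fin (n + 2)) :
    typeI n α γ i ∈ LinearMap.ker (Mt n α β γ) := by
  rw [LinearMap.mem_ker, typeI]
  split_ifs with hi
  · rw [map_add, map_smul, map_smul, Mt_single, Mt_rplus, redSrc_zero]
    simp only [col, if_pos]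
    match_scalars
    field_simp [Complex.ofReal_ne_zero.mpr hα, Complex.ofReal_ne_zero.mpr hγ]
    ring
  · rw [map_add, map_smul, map_smul, Mt_single, Mt_rminus, redTgt_of_ne_zero hi]
    simp only [col, if_neg hi]
    match_scalars
    field_simp [Complex.ofReal_ne_zero.mpr hα, Complex.ofReal_ne_zero.mpr hγ]
    ring

lemma black_sub_add_mem_ker (hβ : β ≠ 0) (hγ : γ ≠ 0) (i : Fin (n + 2))
    {x y : EuclideanSpace ℂ (ColIdx n)}
    (hx : Mt n α β γ x = ((√2 * γ : ℝ) : ℂ) • EuclideanSpace.single (blackSrc n i) 1)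
    (hy : Mt n α β γ y = ((√2 * γ : ℝ) : ℂ) • EuclideanSpace.single (blackTgt n i) 1) :
    ((√2 / β : ℝ) : ℂ) • EuclideanSpace.single (Sum.inr (Sum.inl i)) 1 -
        ((γ⁻¹ : ℝ) : ℂ) • x + ((γ⁻¹ : ℝ) : ℂ) • y ∈ LinearMap.ker (Mt n α β γ) := by
  rw [LinearMap.mem_ker, map_add, map_sub, map_smul, map_smul, map_smul, Mt_single, hx, hy]
  simp only [col]
  match_scalars <;>
    field_simp [Complex.ofReal_ne_zero.mpr hβ, Complex.ofReal_ne_zero.mpr hγ] <;> ring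

end

theorem typeI_typeII_mem_kernel_general (n : ℕ) (α β γ : ℝ)
    (hα : 0 < α) (hβ : 0 < β) (hγ : 0 < γ) :
    ∀ i : Fin (n + 2),
      typeI n α γ i ∈ LinearMap.ker (Mt n α β γ) ∧
      typeII n β γ i ∈ LinearMap.ker (Mt n α β γ) := by
  intro i
  refine ⟨typeI_mem_ker hα.ne' hγ.ne' i, ?_⟩
  unfold typeII
  split_ifs with h0 hlast
  · obtain rfl : i = 0 := Fin.ext h0
    exact black_sub_add_mem_ker hβ.ne' hγ.ne' 0 (by rw [Mt_rminus, blackSrc_zero])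
      (by rw [Mt_rplus, blackTgt_eq_redSrc (i := 0) (j := 1) (by simp)])
  · exact black_sub_add_mem_ker hβ.ne' hγ.ne' i
      (by rw [Mt_rplus, blackSrc_eq_redSrc (Fin.val_ne_zero_iff.mp h0)])
      (by rw [Mt_rminus, blackTgt_eq_redTgt_zero hlast])
  · exact black_sub_add_mem_ker hβ.ne' hγ.ne' i
      (by rw [Mt_rplus, blackSrc_eq_redSrc (Fin.val_ne_zero_iff.mp h0)])
      (by rw [Mt_rplus, blackTgt_eq_redSrc (j := ⟨i + 1, by omega⟩) rfl])

/-- Each of the `n + 2` Type I vectors and each of the `n + 2` Type II vectors lies in the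
kernel of `M̃`. -/
theorem typeI_typeII_mem_kernel (n : ℕ) (hn : 1 ≤ n) (α β γ : ℝ)
    (hα : 0 < α) (hβ : 0 < β) (hγ : 0 < γ) :
    ∀ i : Fin (n + 2),
      typeI n α γ i ∈ LinearMap.ker (Mt n α β γ) ∧
      typeII n β γ i ∈ LinearMap.ker (Mt n α β γ) :=
  typeI_typeII_mem_kernel_general n α β γ hα hβ hγ

end
end
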